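/- arXiv:2111.11132 — 10 statements merged into one kernel-verified Lean document; each statement's English description precedes it below -/
import Mathlib

section
/- Let q be an odd prime power, c ∈ F_q^*, and f(X) = c(X^{q+1} - X^2) defined on F_{q^2}. Then 0 is the unique fixed point of f in F_{q^2}. -/
/-!
Put `β = α ^ q`. For `α ≠ 0` the equation reads `c (β - α) = 1`. The map `x ↦ x ^ q` is a field
automorphism of order two fixing `c` and swapping `α` and `β`, so also `c (α - β) = 1`; adding
the two gives `2 = 0`, impossible in odd characteristic.
-/

namespace FiniteField

variable {K : Type*} [Field K] [Fintype K]

theorem sub_pow_of_card_eq_pow {q k : ℕ} (hK : Fintype.card K = q ^ k) (x y : K) :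
    (x - y) ^ q = x ^ q - y ^ q := by
  obtain ⟨p, _, n, hp, hcard⟩ := FiniteField.card' K
  have hk : k ≠ 0 := by
    rintro rfl
    exact (Fintype.one_lt_card (α := K)).ne' (by simpa using hK)
  obtain ⟨m, -, rfl⟩ := (Nat.dvd_prime_pow hp).mp (hcard ▸ hK ▸ dvd_pow_self q hk)
  have := Fact.mk hp
  exact sub_pow_char_pow x y m

theorem two_ne_zero_of_odd_card (h : Odd (Fintype.card K)) : (2 : K) ≠ 0 :=
  Ring.two_ne_zero fun h2 => by
    have := even_card_iff_char_two.mp h2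
    rw [Nat.odd_iff] at h
    omega

end FiniteField

theorem stmt_0_general (q : ℕ) (hq : Odd q) (K : Type*) [Field K] [Fintype K]
    (hK : Fintype.card K = q ^ 2)
    (c : K) (hcF : c ^ q = c) :
    ∀ α : K, c * (α ^ (q + 1) - α ^ 2) = α ↔ α = 0 := by
  intro α
  refine ⟨fun h => ?_, by rintro rfl; simp⟩
  by_contra hα
  have hinv : (α ^ q) ^ q = α := by rw [← pow_mul, ← sq, ← hK, FiniteField.pow_card]
  have h₁ : c * (α ^ q - α) = 1 :=
    mul_left_cancel₀ hα (by linear_combination h)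
  have h₂ : c * (α - α ^ q) = 1 := by
    simpa only [mul_pow, FiniteField.sub_pow_of_card_eq_pow hK, hcF, hinv, one_pow] using
      congrArg (· ^ q) h₁
  exact FiniteField.two_ne_zero_of_odd_card (hK ▸ hq.pow) (by linear_combination -h₁ - h₂)

/-- 0 is the unique fixed point of f(X) = c(X^{q+1} - X^2) on F_{q^2}. -/
theorem stmt_0 (q : ℕ) (hq : Odd q) (K : Type*) [Field K] [Fintype K]
    (hK : Fintype.card K = q ^ 2)
    (c : K) (hcF : c ^ q = c) (hc0 : c ≠ 0) :
    ∀ α : K, c * (α ^ (q + 1) - α ^ 2) = α ↔ α = 0 :=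
  stmt_0_general q hq K hK c hcF
end

section
/- Let q be an odd prime power, c ∈ F_q^*, and f(X) = c(X^{q+1} - X^2) on F_{q^2}. For α ∈ F_q^*, if -2αc is a nonzero square in F_q then f^{-1}(α) is empty, and if -2αc is a nonsquare in F_q then f^{-1}(α) has exactly 2 elements. -/
/-!
The Frobenius `σ x = x ^ q` is an involution of `K = 𝔽_{q²}` with fixed field `𝔽_q`. Conjugating
`c x (σ x - x) = α` and subtracting shows that every solution satisfies `σ x = -x`, so on solutions
the equation reads `-2 c x² = α`, i.e. `(-2 c x)² = -2 α c` with `-2 c x` anti-invariant. Every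
element of `𝔽_q` has a square root in `𝔽_{q²}`, and such a root is either invariant or
anti-invariant: in the first case there is no solution, in the second exactly the two `±s / (-2c)`.
-/

section Involution

variable {K : Type*} [Field K] (σ : K →+* K) {a b : K}

theorem eq_neg_of_mul_sub_sq_eq (hσ : ∀ x, σ (σ x) = x) {c α x : K} (hc : σ c = c)
    (hα : σ α = α) (hα0 : α ≠ 0) (h : c * (σ x * x - x ^ 2) = α) : σ x = -x := by
  have hσh : c * (x * σ x - σ x ^ 2) = α := by
    simpa only [map_mul, map_sub, map_pow, hσ, hc, hα] using congrArg σ h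
  -- subtracting the conjugate equation factors as `c (σ x - x) (σ x + x) = 0`
  have hfac : (c * (σ x - x)) * (σ x + x) = 0 := by linear_combination h - hσh
  have hcx : c * (σ x - x) ≠ 0 := by
    rintro hcx
    exact hα0 (by linear_combination -h + x * hcx)
  linear_combination (mul_eq_zero.mp hfac).resolve_left hcx

theorem mul_sub_sq_eq_iff (hσ : ∀ x, σ (σ x) = x) {c α x : K} (hc : σ c = c)
    (hα : σ α = α) (hα0 : α ≠ 0) :
    c * (σ x * x - x ^ 2) = α ↔ σ x = -x ∧ -2 * c * x ^ 2 = α := by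
  constructor
  · intro h
    have hx := eq_neg_of_mul_sub_sq_eq σ hσ hc hα hα0 h
    refine ⟨hx, ?_⟩
    rw [hx] at h
    linear_combination h
  · rintro ⟨hx, h⟩
    rw [hx]
    linear_combination h

theorem setOf_map_eq_neg_and_mul_sq_eq_eq_empty (h2 : (2 : K) ≠ 0) (ha : σ a = a) (hb0 : b ≠ 0)
    {t : K} (ht : σ t = t) (ht2 : t ^ 2 = a * b) : {x | σ x = -x ∧ a * x ^ 2 = b} = ∅ := by
  refine Set.eq_empty_of_forall_notMem fun x ⟨hx, hb⟩ => hb0 ?_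
  have hax : (a * x) ^ 2 = t ^ 2 := by rw [ht2, ← hb]; ring
  have hσax : σ (a * x) = a * x := by
    rcases sq_eq_sq_iff_eq_or_eq_neg.mp hax with h | h <;> simp [h, ht]
  have hax0 : a * x = 0 := by
    rw [map_mul, ha, hx] at hσax
    exact (mul_eq_zero.mp (by linear_combination -hσax : 2 * (a * x) = 0)).resolve_left h2
  rw [← hb]
  linear_combination x * hax0

theorem setOf_map_eq_neg_and_mul_sq_eq_eq_pair (ha : σ a = a) (hb : σ b = b) (ha0 : a ≠ 0)
    {s : K} (hs : s ^ 2 = a * b) (hns : ¬ ∃ t, σ t = t ∧ t ^ 2 = a * b) :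
    {x | σ x = -x ∧ a * x ^ 2 = b} = {s / a, -(s / a)} := by
  have hσs : σ s = -s := by
    have : σ s ^ 2 = s ^ 2 := by rw [← map_pow, hs, map_mul, ha, hb]
    exact (sq_eq_sq_iff_eq_or_eq_neg.mp this).resolve_left fun h => hns ⟨s, h, hs⟩
  ext x
  simp only [Set.mem_ofPred_eq, Set.mem_insert_iff, Set.mem_singleton_iff]
  constructor
  · rintro ⟨-, hx⟩
    have hax : (a * x) ^ 2 = s ^ 2 := by rw [hs, ← hx]; ring
    rcases sq_eq_sq_iff_eq_or_eq_neg.mp hax with h | h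
    · left; field_simp; linear_combination h
    · right; field_simp; linear_combination h
  · have hroot : σ (s / a) = -(s / a) ∧ a * (s / a) ^ 2 = b := by
      refine ⟨by rw [map_div₀, hσs, ha, neg_div], ?_⟩
      field_simp
      linear_combination hs
    rintro (rfl | rfl)
    · exact hroot
    · exact ⟨by rw [map_neg, hroot.1], by rw [neg_sq]; exact hroot.2⟩

theorem ncard_setOf_map_eq_neg_and_mul_sq_eq (h2 : (2 : K) ≠ 0) (ha : σ a = a) (hb : σ b = b)
    (ha0 : a ≠ 0) (hb0 : b ≠ 0) {s : K} (hs : s ^ 2 = a * b)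
    (hns : ¬ ∃ t, σ t = t ∧ t ^ 2 = a * b) :
    {x | σ x = -x ∧ a * x ^ 2 = b}.ncard = 2 := by
  rw [setOf_map_eq_neg_and_mul_sq_eq_eq_pair σ ha hb ha0 hs hns]
  have hs0 : s ≠ 0 := by
    rintro rfl
    exact mul_ne_zero ha0 hb0 (by simpa using hs.symm)
  refine Set.ncard_pair fun h => div_ne_zero hs0 ha0 ?_
  exact (mul_eq_zero.mp (by linear_combination h : 2 * (s / a) = 0)).resolve_left h2

end Involution

section FiniteField

variable {K : Type*} [Field K] [Fintype K] {q : ℕ}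

theorem exists_ringHom_pow_eq_of_dvd_card (h : q ∣ Fintype.card K) :
    ∃ σ : K →+* K, ∀ x, σ x = x ^ q := by
  obtain ⟨p, _, n, hp, hcard⟩ := FiniteField.card' K
  have : Fact p.Prime := ⟨hp⟩
  obtain ⟨k, -, rfl⟩ := (Nat.dvd_prime_pow hp).mp (hcard ▸ h)
  exact ⟨iterateFrobenius K p k, fun x => iterateFrobenius_def p k x⟩

theorem ringChar_ne_two_of_card_eq_sq (hq : Odd q) (hK : Fintype.card K = q ^ 2) :
    ringChar K ≠ 2 := by
  rw [Ne, FiniteField.even_card_iff_char_two, hK, ← Nat.even_iff, Nat.even_pow]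
  simp [Nat.not_even_iff_odd.mpr hq]

theorem isSquare_of_pow_eq_self (hq : Odd q) (hK : Fintype.card K = q ^ 2) {u : K}
    (hu : u ^ q = u) : IsSquare u := by
  rcases eq_or_ne u 0 with rfl | hu0
  · exact IsSquare.zero
  rw [FiniteField.isSquare_iff (ringChar_ne_two_of_card_eq_sq hq hK) hu0, hK]
  obtain ⟨m, rfl⟩ := hq
  have hu1 : u ^ (2 * m) = 1 := by
    rw [pow_succ] at hu
    exact (mul_eq_right₀ hu0).mp hu
  have : (2 * m + 1) ^ 2 / 2 = 2 * m * (m + 1) := by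
    have : (2 * m + 1) ^ 2 = 2 * (2 * m * (m + 1)) + 1 := by ring
    omega
  rw [this, pow_mul, hu1, one_pow]

end FiniteField

/-- for α ∈ F_q^*, the preimage f^{-1}(α) is empty if -2αc is a
(nonzero) square in F_q, and has exactly 2 elements if -2αc is a nonsquare in F_q. -/
theorem stmt_2 (q : ℕ) (hq : Odd q) (K : Type*) [Field K] [Fintype K]
    (hK : Fintype.card K = q ^ 2)
    (c : K) (hcF : c ^ q = c) (hc0 : c ≠ 0)
    (α : K) (hαF : α ^ q = α) (hα0 : α ≠ 0) :
    ((∃ t : K, t ^ q = t ∧ t ^ 2 = -2 * α * c) →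
      {x : K | c * (x ^ (q + 1) - x ^ 2) = α} = ∅) ∧
    ((¬ ∃ t : K, t ^ q = t ∧ t ^ 2 = -2 * α * c) →
      Set.ncard {x : K | c * (x ^ (q + 1) - x ^ 2) = α} = 2) := by
  obtain ⟨σ, hσ⟩ := exists_ringHom_pow_eq_of_dvd_card (K := K) (hK ▸ dvd_pow_self q two_ne_zero)
  have hσσ : ∀ x, σ (σ x) = x := fun x => by
    rw [hσ, hσ, ← pow_mul, ← sq, ← hK, FiniteField.pow_card]
  have h2 : (2 : K) ≠ 0 := Ring.two_ne_zero (ringChar_ne_two_of_card_eq_sq hq hK)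
  rw [← hσ] at hcF hαF
  have ha : σ (-2 * c) = -2 * c := by rw [map_mul, map_neg, map_ofNat, hcF]
  have ha0 : -2 * c ≠ 0 := mul_ne_zero (neg_ne_zero.mpr h2) hc0
  have hpre : {x : K | c * (x ^ (q + 1) - x ^ 2) = α} =
      {x | σ x = -x ∧ -2 * c * x ^ 2 = α} := by
    ext x
    rw [Set.mem_ofPred_eq, pow_succ, ← hσ]
    exact mul_sub_sq_eq_iff σ hσσ hcF hαF hα0
  simp only [← hσ, hpre, show -2 * α * c = -2 * c * α by ring]
  refine ⟨fun ⟨t, ht, ht2⟩ => setOf_map_eq_neg_and_mul_sq_eq_eq_empty σ h2 ha hα0 ht ht2,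
    fun hns => ?_⟩
  obtain ⟨s, hs⟩ : IsSquare (-2 * c * α) :=
    isSquare_of_pow_eq_self hq hK (by rw [← hσ, map_mul, ha, hαF])
  exact ncard_setOf_map_eq_neg_and_mul_sq_eq σ h2 ha hαF ha0 hα0 (by rw [sq, hs]) hns
end

section
/- Let q be an odd prime power, c ∈ F_q^*, and f(X) = c(X^{q+1} - X^2) on F_{q^2}. If α ∈ F_q^* and γ ∈ F_{q^2} satisfies f(γ) = α, then f^{-1}(γ) is empty. -/
/-!
Write `σ y = y ^ q` for the Frobenius involution of `F_{q^2}`, so that `f y = c * (y * σ y - y ^ 2)`.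
Since `c` is `σ`-fixed, `f γ - σ (f γ) = c (σ γ - γ) (γ + σ γ)`; as `α = f γ` is `σ`-fixed and
nonzero this forces `σ γ = -γ`. But `f x + σ (f x) = -c (σ x - x) ^ 2`, so `f x = γ` would give
`σ x = x`, hence `γ = f x = 0` and `α = f 0 = 0`.
-/

theorem FiniteField.exists_ringHom_eq_pow_of_dvd_card {K : Type*} [Field K] [Fintype K] {q : ℕ}
    (hq : q ∣ Fintype.card K) : ∃ σ : K →+* K, ∀ y, σ y = y ^ q := by
  obtain ⟨p, _⟩ := CharP.exists K
  obtain ⟨n, hp, hcard⟩ := FiniteField.card K p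
  have : Fact p.Prime := ⟨hp⟩
  obtain ⟨m, -, rfl⟩ := (Nat.dvd_prime_pow hp).mp (hcard ▸ hq)
  exact ⟨iterateFrobenius K p m, iterateFrobenius_def p m⟩

theorem FiniteField.pow_pow_eq_self_of_card_eq_sq {K : Type*} [Field K] [Fintype K] {q : ℕ}
    (hK : Fintype.card K = q ^ 2) (y : K) : (y ^ q) ^ q = y := by
  rw [← pow_mul, ← sq, ← hK, FiniteField.pow_card]

section NormSubSq

variable {R : Type*} [CommRing R] (σ : R →+* R) (c : R)

def normSubSq (y : R) : R := c * (y * σ y - y ^ 2)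

variable {σ c}

theorem normSubSq_sub_map (hσ : ∀ y, σ (σ y) = y) (hc : σ c = c) (y : R) :
    normSubSq σ c y - σ (normSubSq σ c y) = c * (σ y - y) * (y + σ y) := by
  simp only [normSubSq, map_mul, map_sub, map_pow, hσ, hc]
  ring

theorem normSubSq_add_map (hσ : ∀ y, σ (σ y) = y) (hc : σ c = c) (y : R) :
    normSubSq σ c y + σ (normSubSq σ c y) = -c * (σ y - y) ^ 2 := by
  simp only [normSubSq, map_mul, map_sub, map_pow, hσ, hc]
  ring

theorem normSubSq_of_map_eq_self (y : R) (hy : σ y = y) : normSubSq σ c y = 0 := by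
  simp [normSubSq, hy, sq]

variable [IsDomain R]

theorem map_eq_neg_of_normSubSq_fixed (hσ : ∀ y, σ (σ y) = y) (hc : σ c = c) (hc0 : c ≠ 0)
    {γ : R} (hfix : σ (normSubSq σ c γ) = normSubSq σ c γ) (hne : normSubSq σ c γ ≠ 0) :
    σ γ = -γ := by
  have hprod : c * (σ γ - γ) * (γ + σ γ) = 0 := by
    rw [← normSubSq_sub_map hσ hc, hfix, sub_self]
  rcases mul_eq_zero.mp hprod with h | h
  · rw [mul_eq_zero, sub_eq_zero] at h
    exact absurd (normSubSq_of_map_eq_self γ (h.resolve_left hc0)) hne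
  · exact eq_neg_of_add_eq_zero_right h

theorem map_eq_self_of_map_normSubSq_eq_neg (hσ : ∀ y, σ (σ y) = y) (hc : σ c = c) (hc0 : c ≠ 0)
    {x : R} (hanti : σ (normSubSq σ c x) = -normSubSq σ c x) : σ x = x := by
  have hsq : -c * (σ x - x) ^ 2 = 0 := by
    rw [← normSubSq_add_map hσ hc, hanti, add_neg_cancel]
  exact sub_eq_zero.mp (pow_eq_zero_iff two_ne_zero |>.mp
    ((mul_eq_zero.mp hsq).resolve_left (neg_ne_zero.mpr hc0)))

end NormSubSq

theorem stmt_3_general (q : ℕ) (K : Type*) [Field K] [Fintype K]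
    (hK : Fintype.card K = q ^ 2)
    (c : K) (hcF : c ^ q = c) (hc0 : c ≠ 0)
    (α : K) (hαF : α ^ q = α) (hα0 : α ≠ 0)
    (γ : K) (hγ : c * (γ ^ (q + 1) - γ ^ 2) = α) :
    {x : K | c * (x ^ (q + 1) - x ^ 2) = γ} = ∅ := by
  obtain ⟨σ, hσq⟩ := FiniteField.exists_ringHom_eq_pow_of_dvd_card (hK ▸ dvd_pow_self q two_ne_zero)
  have hσ : ∀ y, σ (σ y) = y := fun y => by
    rw [hσq, hσq, FiniteField.pow_pow_eq_self_of_card_eq_sq hK]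
  have hf : ∀ y : K, c * (y ^ (q + 1) - y ^ 2) = normSubSq σ c y := fun y => by
    rw [normSubSq, hσq, pow_succ']
  have hc : σ c = c := (hσq c).trans hcF
  rw [hf] at hγ
  have hγσ : σ γ = -γ := map_eq_neg_of_normSubSq_fixed hσ hc hc0
    (by rw [hγ, hσq, hαF]) (hγ ▸ hα0)
  refine Set.eq_empty_of_forall_notMem fun x (hx : _ = γ) => hα0 ?_
  rw [hf] at hx
  have hxσ : σ x = x := map_eq_self_of_map_normSubSq_eq_neg hσ hc hc0 (by rw [hx, hγσ])
  rw [← hγ, ← hx, normSubSq_of_map_eq_self x hxσ, normSubSq_of_map_eq_self 0 (map_zero σ)]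

/-- if α ∈ F_q^* and f(γ) = α, then f^{-1}(γ) is empty. -/
theorem stmt_3 (q : ℕ) (hq : Odd q) (K : Type*) [Field K] [Fintype K]
    (hK : Fintype.card K = q ^ 2)
    (c : K) (hcF : c ^ q = c) (hc0 : c ≠ 0)
    (α : K) (hαF : α ^ q = α) (hα0 : α ≠ 0)
    (γ : K) (hγ : c * (γ ^ (q + 1) - γ ^ 2) = α) :
    {x : K | c * (x ^ (q + 1) - x ^ 2) = γ} = ∅ :=
  stmt_3_general q K hK c hcF hc0 α hαF hα0 γ hγ
end

section
/- Let q be an odd prime power, c ∈ F_q^*, and f(X) = c(X^{q+1} - X^2) on F_{q^2}. Every periodic cycle of f of length greater than 1 has even length. -/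
/-!
Write `f X = c X (X^q - X)`. Since `X ↦ X^q` is an involutive field automorphism of `F_{q^2}`
fixing `c`, one gets `f(x)^q · x = -x^q · f(x)`, so the ratio `x^q / x` changes sign at every
step of an orbit avoiding `0`. A cycle of length `> 1` avoids the fixed point `0`, so returning
to its start after an odd number of steps would give `x^q / x = -(x^q / x)`, impossible in odd
characteristic since `x ≠ 0`.
-/

namespace Function

variable {α : Type*} {f : α → α}

theorem iterate_ne_of_isFixedPt_of_one_lt_minimalPeriod {x y : α} (hy : IsFixedPt f y)
    (hx : 1 < minimalPeriod f x) (n : ℕ) : f^[n] x ≠ y := by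
  rintro rfl
  have hmem : x ∈ periodicPts f := minimalPeriod_pos_iff_mem_periodicPts.1 (by omega)
  have := minimalPeriod_apply_iterate hmem n
  rw [minimalPeriod_eq_one_iff_isFixedPt.2 hy] at this
  omega

theorem even_minimalPeriod_of_map_neg {G : Type*} [InvolutiveNeg G] (φ : α → G) {x : α}
    (hφ : ∀ n, φ (f^[n + 1] x) = -φ (f^[n] x)) (hx : -φ x ≠ φ x) :
    Even (minimalPeriod f x) := by
  have sign : ∀ n, φ (f^[n] x) = if Even n then φ x else -φ x := by
    intro n
    induction n with
    | zero => simp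
    | succ n ih =>
      rw [hφ, ih]
      by_cases hn : Even n <;> simp [hn, Nat.even_add_one]
  by_contra hodd
  have := sign (minimalPeriod f x)
  rw [iterate_minimalPeriod, if_neg hodd] at this
  exact hx this.symm

end Function

namespace FiniteField

variable {K : Type*} [Field K] [Fintype K] {q : ℕ}

theorem sub_pow_of_card_eq_sq (hK : Fintype.card K = q ^ 2) (a b : K) :
    (a - b) ^ q = a ^ q - b ^ q := by
  obtain ⟨m, hp, hcard⟩ := card K (ringChar K)
  have : Fact (ringChar K).Prime := ⟨hp⟩
  have hq : q ∣ ringChar K ^ (m : ℕ) := ⟨q, by rw [← hcard, hK, sq]⟩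
  obtain ⟨k, -, rfl⟩ := (Nat.dvd_prime_pow hp).1 hq
  exact sub_pow_char_pow a b k

theorem ringChar_ne_two_of_card_eq_sq (hK : Fintype.card K = q ^ 2) (hq : Odd q) :
    ringChar K ≠ 2 := by
  rw [Ne, even_card_iff_char_two, hK, ← Nat.even_iff]
  exact Nat.not_even_iff_odd.2 hq.pow

theorem pow_div_self_map_eq_neg (hK : Fintype.card K = q ^ 2) {c : K} (hc : c ^ q = c) {x : K}
    (hx : x ≠ 0) (hfx : c * (x ^ (q + 1) - x ^ 2) ≠ 0) :
    (c * (x ^ (q + 1) - x ^ 2)) ^ q / (c * (x ^ (q + 1) - x ^ 2)) = -(x ^ q / x) := by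
  have hxq : (x ^ q) ^ q = x := by rw [← pow_mul, ← sq, ← hK, pow_card]
  rw [div_eq_iff hfx, mul_pow, hc, sub_pow_of_card_eq_sq hK, pow_succ, mul_pow, hxq]
  field_simp
  ring

end FiniteField

open FiniteField Function

theorem stmt_6_general (q : ℕ) (hq : Odd q) (K : Type*) [Field K] [Fintype K]
    (hK : Fintype.card K = q ^ 2)
    (c : K) (hcF : c ^ q = c) :
    ∀ α : K,
      1 < Function.minimalPeriod (fun X : K => c * (X ^ (q + 1) - X ^ 2)) α →
      Even (Function.minimalPeriod (fun X : K => c * (X ^ (q + 1) - X ^ 2)) α) := by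
  intro α hα
  set f : K → K := fun X => c * (X ^ (q + 1) - X ^ 2)
  have hzero : IsFixedPt f 0 := by simp [f, IsFixedPt]
  have hne := iterate_ne_of_isFixedPt_of_one_lt_minimalPeriod hzero hα
  refine even_minimalPeriod_of_map_neg (fun x : K => x ^ q / x) (fun n => ?_) ?_
  · rw [iterate_succ_apply']
    exact pow_div_self_map_eq_neg hK hcF (hne n)
      (by simpa only [iterate_succ_apply'] using hne (n + 1))
  · rw [Ne, Ring.eq_self_iff_eq_zero_of_char_ne_two (ringChar_ne_two_of_card_eq_sq hK hq)]
    exact div_ne_zero (pow_ne_zero q (hne 0)) (hne 0)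

/-- every cycle of f(X) = c(X^{q+1} - X^2) of length greater than 1
has even length. -/
theorem stmt_6 (q : ℕ) (hq : Odd q) (K : Type*) [Field K] [Fintype K]
    (hK : Fintype.card K = q ^ 2)
    (c : K) (hcF : c ^ q = c) (hc0 : c ≠ 0) :
    ∀ α : K,
      1 < Function.minimalPeriod (fun X : K => c * (X ^ (q + 1) - X ^ 2)) α →
      Even (Function.minimalPeriod (fun X : K => c * (X ^ (q + 1) - X ^ 2)) α) :=
  stmt_6_general q hq K hK c hcF
end

section
/- Let q be odd, β ∈ F_{q^2} with β^2 = b a nonsquare in F_q, c ∈ F_q^*, and f(X) = c(X^{q+1} - X^2). Writing g(x,y) = -8bc^3xy^2, for all x, y ∈ F_q and all n ≥ 1, f^{(2n)}(x + yβ) = g(x,y)^{(4^n - 1)/3} (x + yβ). -/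
/-!
Since `Fintype.card K = q ^ 2`, `q` is a power of the characteristic, so `σ z = z ^ q` is a ring
endomorphism of `K`; it fixes `x, y, c, β ^ 2` and sends `β` to `-β`, because `β` itself is not a
square root of `β ^ 2` fixed by `σ`. Hence `f z = c * (σ z * z - z ^ 2) = -2 c y β z` on
`z = x + y β`, and two steps give `f (f z) = g(x, y) * z`. As `f` is homogeneous of degree two over
the fixed field, `f^[2] (λ z) = λ ^ 4 * f^[2] z` for `σ λ = λ`, so the exponent `e n` of `g` in
`f^[2n] z` obeys `e (n + 1) = 4 e n + 1`, i.e. `e n = ∑ i < n, 4 ^ i = (4 ^ n - 1) / 3`.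
-/

open Finset Function

theorem exists_ringHom_apply_eq_pow_of_dvd_card {K : Type*} [Field K] [Fintype K] {q : ℕ}
    (hq : q ∣ Fintype.card K) : ∃ σ : K →+* K, ∀ z, σ z = z ^ q := by
  obtain ⟨p, hchar⟩ := CharP.exists K
  have : Fact p.Prime := ⟨CharP.char_is_prime K p⟩
  obtain ⟨n, hp, hcard⟩ := FiniteField.card K p
  obtain ⟨k, -, rfl⟩ := (Nat.dvd_prime_pow hp).mp (hcard ▸ hq)
  exact ⟨iterateFrobenius K p k, fun z => iterateFrobenius_def p k z⟩

theorem pow_eq_neg_of_sq_pow_eq {K : Type*} [Field K] {q : ℕ} {β : K}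
    (hsq : (β ^ 2) ^ q = β ^ 2) (hroot : ¬ ∃ t : K, t ^ q = t ∧ t ^ 2 = β ^ 2) :
    β ^ q = -β := by
  have h : (β ^ q) ^ 2 = β ^ 2 := by rw [← pow_mul, mul_comm, pow_mul, hsq]
  exact (sq_eq_sq_iff_eq_or_eq_neg.mp h).resolve_left fun hβ => hroot ⟨β, hβ, rfl⟩

section NormSubSq

variable {R : Type*} [CommRing R] (σ : R →+* R) (c : R)

/-- The map `z ↦ c (z^{q+1} - z^2)` written with the conjugation `σ z = z ^ q`. -/
def normSubSqMap (z : R) : R := c * (σ z * z - z ^ 2)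

variable {σ c}

theorem normSubSqMap_mul_of_fixed {l : R} (hl : σ l = l) (z : R) :
    normSubSqMap σ c (l * z) = l ^ 2 * normSubSqMap σ c z := by
  simp only [normSubSqMap, map_mul, hl]
  ring

theorem normSubSqMap_iterate_two_mul_of_fixed {l : R} (hl : σ l = l) (z : R) :
    (normSubSqMap σ c)^[2] (l * z) = l ^ 4 * (normSubSqMap σ c)^[2] z := by
  have hl2 : σ (l ^ 2) = l ^ 2 := by rw [map_pow, hl]
  simp only [iterate_succ, iterate_zero, comp_apply, id_eq, normSubSqMap_mul_of_fixed hl,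
    normSubSqMap_mul_of_fixed hl2]
  ring

variable {β : R} (hβ : σ β = -β) (hc : σ c = c)
include hβ

theorem normSubSqMap_add_mul {x y : R} (hx : σ x = x) (hy : σ y = y) :
    normSubSqMap σ c (x + y * β) = -2 * β ^ 2 * c * y ^ 2 + (-2 * c * x * y) * β := by
  simp only [normSubSqMap, map_add, map_mul, hx, hy, hβ]
  ring

include hc

theorem normSubSqMap_iterate_two_add_mul {x y : R} (hx : σ x = x) (hy : σ y = y) :
    (normSubSqMap σ c)^[2] (x + y * β) = (-8 * β ^ 2 * c ^ 3 * x * y ^ 2) * (x + y * β) := by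
  have hx' : σ (-2 * β ^ 2 * c * y ^ 2) = -2 * β ^ 2 * c * y ^ 2 := by simp [map_ofNat, hβ, hc, hy]
  have hy' : σ (-2 * c * x * y) = -2 * c * x * y := by simp [map_ofNat, hc, hx, hy]
  rw [iterate_succ_apply, iterate_one, normSubSqMap_add_mul hβ hx hy,
    normSubSqMap_add_mul hβ hx' hy']
  ring

theorem normSubSqMap_iterate_two_mul_add_mul {x y : R} (hx : σ x = x) (hy : σ y = y) (n : ℕ) :
    (normSubSqMap σ c)^[2 * n] (x + y * β) =
      (-8 * β ^ 2 * c ^ 3 * x * y ^ 2) ^ (∑ i ∈ range n, 4 ^ i) * (x + y * β) := by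
  set g := -8 * β ^ 2 * c ^ 3 * x * y ^ 2
  have hg : σ g = g := by simp [g, map_ofNat, hβ, hc, hx, hy]
  induction n with
  | zero => simp
  | succ n ih =>
    rw [mul_add_one, add_comm, iterate_add_apply, ih,
      normSubSqMap_iterate_two_mul_of_fixed (by rw [map_pow, hg]),
      normSubSqMap_iterate_two_add_mul hβ hc hx hy, geom_sum_succ, pow_succ g, pow_mul']
    ring

end NormSubSq

theorem stmt_7_general (q : ℕ) (K : Type*) [Field K] [Fintype K]
    (hK : Fintype.card K = q ^ 2)
    (β : K) (hbF : (β ^ 2) ^ q = β ^ 2)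
    (hbns : ¬ ∃ t : K, t ^ q = t ∧ t ^ 2 = β ^ 2)
    (c : K) (hcF : c ^ q = c)
    (x y : K) (hx : x ^ q = x) (hy : y ^ q = y) :
    ∀ n : ℕ, 1 ≤ n →
      (fun X : K => c * (X ^ (q + 1) - X ^ 2))^[2 * n] (x + y * β) =
        (-8 * β ^ 2 * c ^ 3 * x * y ^ 2) ^ ((4 ^ n - 1) / 3) * (x + y * β) := by
  obtain ⟨σ, hσ⟩ := exists_ringHom_apply_eq_pow_of_dvd_card (hK ▸ dvd_pow_self q two_ne_zero)
  have hf : (fun X : K => c * (X ^ (q + 1) - X ^ 2)) = normSubSqMap σ c := by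
    funext z
    rw [normSubSqMap, hσ, pow_succ]
  intro n _
  rw [hf, ← Nat.geomSum_eq (by norm_num)]
  exact normSubSqMap_iterate_two_mul_add_mul (by rw [hσ, pow_eq_neg_of_sq_pow_eq hbF hbns])
    (by rw [hσ, hcF]) (by rw [hσ, hx]) (by rw [hσ, hy]) n

/-- f^{(2n)}(x + yβ) = g(x,y)^{(4^n-1)/3} (x + yβ), with
g(x,y) = -8bc³xy², b = β². -/
theorem stmt_7 (q : ℕ) (hq : Odd q) (K : Type*) [Field K] [Fintype K]
    (hK : Fintype.card K = q ^ 2)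
    (β : K) (hbF : (β ^ 2) ^ q = β ^ 2)
    (hbns : ¬ ∃ t : K, t ^ q = t ∧ t ^ 2 = β ^ 2)
    (c : K) (hcF : c ^ q = c) (hc0 : c ≠ 0)
    (x y : K) (hx : x ^ q = x) (hy : y ^ q = y) :
    ∀ n : ℕ, 1 ≤ n →
      (fun X : K => c * (X ^ (q + 1) - X ^ 2))^[2 * n] (x + y * β) =
        (-8 * β ^ 2 * c ^ 3 * x * y ^ 2) ^ ((4 ^ n - 1) / 3) * (x + y * β) :=
  stmt_7_general q K hK β hbF hbns c hcF x y hx hy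
end

section
/- Let q be an odd prime power with q - 1 = 2^s r, r odd, c ∈ F_q^*, and f(X) = c(X^{q+1} - X^2) on F_{q^2}. For every odd divisor d of q-1, the number of periodic points of f lying on cycles of length 2·ord_{3d}(4) equals φ(d)(q-1) summed over those d with the same value of ord_{3d}(4); equivalently, the number of cycles of length 2·ord_{3d}(4) arising from d is φ(d)(q-1)/(2·ord_{3d}(4)). Moreover every cycle of length greater than 1 has length 2·ord_{3d}(4) for some odd divisor d of q-1. -/
/-!
Let `σ` be the Frobenius `x ↦ x ^ q` of `𝔽_{q²}/𝔽_q`, so that `f x = c x (σ x - x)`. Then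
`f (f x) = z x * x` with `z x = -c³ (σ x - x)² (σ x + x) ∈ 𝔽_q`, and as `f (w x) = w² f x` and
`z (w x) = w³ z x` for `w ∈ 𝔽_q`, we get `f^[2k] x = z x ^ ((4^k - 1)/3) * x`, whereas
`f^[2k+1] x / x` is negated by `σ`, hence never `1`. So `x ≠ 0` returns to itself exactly at the
times `2k` with `3 d ∣ 4^k - 1`, `d` being the order of `z x`: its exact period is `2 ord_{3d}(4)`.

For the count, `x ↦ (σ x - x, σ x + x)` identifies `𝔽_{q²}` with `{y | σ y = -y} × 𝔽_q`, turning
`z` into `(y, s) ↦ -c³ y² s`; so every `w ∈ 𝔽_q^*` has `q - 1` preimages under `z`, and the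
`φ(d)` elements of order `d` contribute `φ(d)(q - 1)` points of period `2 ord_{3d}(4)`.
-/

open Finset Function Polynomial

theorem Function.minimalPeriod_eq_two_mul_orderOf {α M : Type*} [Monoid M] {f : α → α} {x : α}
    {g : M} (heven : ∀ k, f^[2 * k] x = x ↔ g ^ k = 1) (hodd : ∀ k, f^[2 * k + 1] x ≠ x) :
    minimalPeriod f x = 2 * orderOf g := by
  refine Nat.dvd_right_iff_eq.mp fun n => ?_
  rw [← isPeriodicPt_iff_minimalPeriod_dvd]
  obtain ⟨k, rfl | rfl⟩ := Nat.even_or_odd' n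
  · rw [Nat.mul_dvd_mul_iff_left two_pos, orderOf_dvd_iff_pow_eq_one]
    exact heven k
  · refine iff_of_false (hodd k) fun h => ?_
    have := (dvd_mul_right 2 _).trans h
    omega

theorem ZMod.four_pow_eq_one_iff (d k : ℕ) :
    (4 : ZMod (3 * d)) ^ k = 1 ↔ d ∣ ∑ i ∈ range k, 4 ^ i := by
  have h : (4 : ZMod (3 * d)) ^ k - 1 = ((3 * ∑ i ∈ range k, 4 ^ i : ℕ) : ZMod (3 * d)) := by
    rw [← geom_sum_mul]
    push_cast
    ring
  rw [← sub_eq_zero, h, ZMod.natCast_eq_zero_iff, Nat.mul_dvd_mul_iff_left three_pos]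

theorem ZMod.odd_of_orderOf_four_ne_zero {d : ℕ} (h : orderOf (4 : ZMod (3 * d)) ≠ 0) : Odd d := by
  have hunit := (orderOf_ne_zero_iff.mp h).isUnit
  have hcop : Nat.Coprime 4 (3 * d) :=
    (ZMod.isUnit_iff_coprime 4 _).mp (by exact_mod_cast hunit)
  have h2 : Nat.Coprime 2 (3 * d) := hcop.coprime_dvd_left (by norm_num)
  exact (Nat.odd_mul.mp (Nat.coprime_two_left.mp h2)).2

theorem orderOf_dvd_sub_one_iff_pow_eq_self {G₀ : Type*} [GroupWithZero G₀] {w : G₀}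
    (hw : orderOf w ≠ 0) {q : ℕ} (hq : 1 ≤ q) : orderOf w ∣ q - 1 ↔ w ^ q = w := by
  have hw0 : w ≠ 0 := by
    rintro rfl
    exact hw (orderOf_zero _)
  rw [orderOf_dvd_iff_pow_eq_one, ← mul_left_inj' hw0, ← pow_succ, Nat.sub_add_cancel hq,
    one_mul]

section Algebra

variable {K : Type*} [Field K]

def quadMap (σ : K →+* K) (c x : K) : K := c * (x * σ x - x ^ 2)

def quadMultiplier (σ : K →+* K) (c x : K) : K := -c ^ 3 * (σ x - x) ^ 2 * (σ x + x)

variable {σ : K →+* K} {c : K}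

@[simp]
lemma quadMap_zero : quadMap σ c 0 = 0 := by simp [quadMap]

@[simp]
lemma quadMultiplier_zero : quadMultiplier σ c 0 = 0 := by simp [quadMultiplier]

lemma map_quadMultiplier (hσ : Involutive σ) (hc : σ c = c) (x : K) :
    σ (quadMultiplier σ c x) = quadMultiplier σ c x := by
  simp only [quadMultiplier, map_mul, map_neg, map_pow, map_sub, map_add, hσ x, hc]
  ring

lemma quadMap_quadMap (hσ : Involutive σ) (hc : σ c = c) (x : K) :
    quadMap σ c (quadMap σ c x) = quadMultiplier σ c x * x := by
  simp only [quadMap, quadMultiplier, map_mul, map_sub, map_pow, hσ x, hc]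
  ring

lemma quadMap_mul {w : K} (hw : σ w = w) (x : K) :
    quadMap σ c (w * x) = w ^ 2 * quadMap σ c x := by
  simp only [quadMap, map_mul, hw]
  ring

lemma quadMultiplier_mul {w : K} (hw : σ w = w) (x : K) :
    quadMultiplier σ c (w * x) = w ^ 3 * quadMultiplier σ c x := by
  simp only [quadMultiplier, map_mul, hw]
  ring

lemma iterate_quadMap_two_mul (hσ : Involutive σ) (hc : σ c = c) (k : ℕ) (x : K) :
    (quadMap σ c)^[2 * k] x = quadMultiplier σ c x ^ (∑ i ∈ range k, 4 ^ i) * x := by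
  induction k generalizing x with
  | zero => simp
  | succ k ih =>
    rw [mul_add, mul_one, iterate_add_apply, ih, iterate_succ_apply, iterate_one,
      quadMap_quadMap hσ hc, quadMultiplier_mul (map_quadMultiplier hσ hc x), geom_sum_succ]
    ring

lemma iterate_quadMap_two_mul_add_one_ne (hσ : Involutive σ) (hc : σ c = c) (h2 : (2 : K) ≠ 0)
    {x : K} (hx : x ≠ 0) (k : ℕ) : (quadMap σ c)^[2 * k + 1] x ≠ x := by
  set w := quadMultiplier σ c x ^ (∑ i ∈ range k, 4 ^ i)
  have hw : σ w = w := by rw [map_pow, map_quadMultiplier hσ hc]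
  set t := w ^ 2 * (c * (σ x - x))
  have hσt : σ t = -t := by
    simp only [t, map_mul, map_pow, map_sub, hw, hc, hσ x]
    ring
  intro h
  rw [iterate_succ_apply', iterate_quadMap_two_mul hσ hc, quadMap_mul hw] at h
  have ht : t = 1 := by
    refine (mul_eq_right₀ hx).mp (.trans ?_ h)
    simp only [t, quadMap]
    ring
  rw [ht, map_one] at hσt
  exact h2 (by linear_combination hσt)

/-- If the order `d` of the multiplier is even or `0`, then `4` is not a unit mod `3 d`, so the
right-hand side is `0`: such an `x` is not periodic. -/
theorem minimalPeriod_quadMap (hσ : Involutive σ) (hc : σ c = c) (h2 : (2 : K) ≠ 0) {x : K}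
    (hx : x ≠ 0) : minimalPeriod (quadMap σ c) x =
      2 * orderOf (4 : ZMod (3 * orderOf (quadMultiplier σ c x))) := by
  refine minimalPeriod_eq_two_mul_orderOf (fun k => ?_)
    (iterate_quadMap_two_mul_add_one_ne hσ hc h2 hx)
  rw [iterate_quadMap_two_mul hσ hc, mul_eq_right₀ hx, ZMod.four_pow_eq_one_iff,
    orderOf_dvd_iff_pow_eq_one]

lemma minimalPeriod_quadMap_zero : minimalPeriod (quadMap σ c) 0 = 1 :=
  minimalPeriod_eq_one_iff_isFixedPt.mpr quadMap_zero

end Algebra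

theorem FiniteField.exists_ringHom_eq_pow {K : Type*} [Field K] [Fintype K] {q : ℕ}
    (hq : q ∣ Fintype.card K) : ∃ σ : K →+* K, ∀ x, σ x = x ^ q := by
  obtain ⟨n, hp, hcard⟩ := FiniteField.card K (ringChar K)
  have : Fact (ringChar K).Prime := ⟨hp⟩
  obtain ⟨j, -, rfl⟩ := (Nat.dvd_prime_pow hp).mp (hcard ▸ hq)
  exact ⟨iterateFrobenius K (ringChar K) j, iterateFrobenius_def _ _⟩

theorem card_filter_pow_eq_mul_le {K : Type*} [Field K] [Fintype K] [DecidableEq K] {q : ℕ}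
    (hq : 1 < q) (a : K) : #{x | x ^ q = a * x} ≤ q := by
  have hlt : (C a * X : K[X]).natDegree < (X ^ q : K[X]).natDegree := by
    rw [natDegree_X_pow]
    exact ((natDegree_C_mul_le a X).trans natDegree_X_le).trans_lt hq
  have hdeg : (X ^ q - C a * X : K[X]).natDegree = q := by
    rw [natDegree_sub_eq_left_of_natDegree_lt hlt, natDegree_X_pow]
  have hne : (X ^ q - C a * X : K[X]) ≠ 0 := by
    rintro h
    rw [h, natDegree_zero] at hdeg
    omega
  refine (card_le_degree_of_subset_roots fun x hx => ?_).trans hdeg.le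
  rw [mem_roots hne, IsRoot.def]
  simpa [sub_eq_zero] using (mem_filter.mp hx).2

theorem FiniteField.card_orderOf_eq_totient {K : Type*} [Field K] [Fintype K] [DecidableEq K]
    {d : ℕ} (hd : d ∣ Fintype.card K - 1) : #{w : K | orderOf w = d} = Nat.totient d := by
  have hd0 : d ≠ 0 := by
    rintro rfl
    have := Fintype.one_lt_card (α := K)
    omega
  rw [← IsCyclic.card_orderOf_eq_totient (α := Kˣ) (by rwa [Fintype.card_units])]
  symm
  refine card_nbij (fun u => (u : K)) (fun u hu => ?_) Units.val_injective.injOn fun w hw => ?_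
  · simpa [orderOf_units] using hu
  · have hw0 : w ≠ 0 := by
      rintro rfl
      exact hd0 ((mem_filter.mp hw).2 ▸ orderOf_zero K)
    exact ⟨Units.mk0 w hw0, by simpa [← orderOf_units] using hw, rfl⟩

theorem FiniteField.involutive_of_card_eq_sq {K : Type*} [Field K] [Fintype K] {σ : K →+* K}
    {q : ℕ} (hσq : ∀ x, σ x = x ^ q) (hK : Fintype.card K = q ^ 2) : Involutive σ := fun x => by
  rw [hσq, hσq, ← pow_mul, ← sq, ← hK, FiniteField.pow_card]

section Counting

variable {K : Type*} [Field K] [Fintype K] {σ : K →+* K} {c : K} {q : ℕ}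

theorem card_fixed_mul_card_antifixed [DecidableEq K] (hσ : Involutive σ) (h2 : (2 : K) ≠ 0) :
    #{x | σ x = x} * #{y | σ y = -y} = Fintype.card K := by
  rw [← card_product, ← card_univ]
  refine card_nbij' (fun p => (p.1 - p.2) / 2) (fun x => (σ x + x, σ x - x)) ?_ ?_ ?_ ?_
  · simp
  · intro x _
    simp only [coe_product, coe_filter, mem_univ, true_and, Set.mem_prod, Set.mem_ofPred_eq,
      map_add, map_sub, hσ x]
    constructor <;> ring
  · rintro ⟨s, y⟩ h
    simp only [coe_product, coe_filter, mem_univ, true_and, Set.mem_prod, Set.mem_ofPred_eq] at h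
    simp only [map_div₀, map_sub, map_ofNat, h.1, h.2, Prod.mk.injEq]
    constructor <;> field_simp <;> ring
  · intro x _
    simp only
    field_simp
    ring

theorem card_antifixed_of_card_eq_sq [DecidableEq K] (hσq : ∀ x, σ x = x ^ q)
    (hK : Fintype.card K = q ^ 2) (h2 : (2 : K) ≠ 0) (hq : 1 < q) : #{y | σ y = -y} = q := by
  have hprod := card_fixed_mul_card_antifixed (FiniteField.involutive_of_card_eq_sq hσq hK) h2
  have hfix : #{x | σ x = x} ≤ q := by simpa [hσq] using card_filter_pow_eq_mul_le hq (1 : K)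
  have hanti : #{y | σ y = -y} ≤ q := by simpa [hσq] using card_filter_pow_eq_mul_le hq (-1 : K)
  nlinarith

theorem card_quadMultiplier_eq [DecidableEq K] (hσ : Involutive σ) (hc : σ c = c) (hc0 : c ≠ 0)
    (h2 : (2 : K) ≠ 0) {w : K} (hw : σ w = w) (hw0 : w ≠ 0) :
    #{x | quadMultiplier σ c x = w} = #{y | σ y = -y} - 1 := by
  have hanti : ∀ x, σ (σ x - x) = -(σ x - x) := fun x => by rw [map_sub, hσ x]; ring
  have hsub : ∀ x, quadMultiplier σ c x = w → σ x - x ≠ 0 := fun x hx h => by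
    simp [← hx, quadMultiplier, h] at hw0
  rw [← card_erase_of_mem (mem_filter.mpr ⟨mem_univ 0, by simp⟩)]
  refine card_nbij' (fun x => σ x - x) (fun y => (w / (-c ^ 3 * y ^ 2) - y) / 2) ?_ ?_ ?_ ?_
  · intro x hx
    simp only [coe_filter, mem_univ, true_and, Set.mem_ofPred_eq, coe_erase, Set.mem_sdiff,
      Set.mem_singleton_iff] at hx ⊢
    exact ⟨hanti x, hsub x hx⟩
  · intro y hy
    simp only [coe_filter, mem_univ, true_and, Set.mem_ofPred_eq, coe_erase, Set.mem_sdiff,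
      Set.mem_singleton_iff] at hy ⊢
    simp only [quadMultiplier, map_div₀, map_sub, map_mul, map_neg, map_pow, map_ofNat, hw, hc,
      hy.1]
    field_simp [hy.2]
    ring
  · intro x hx
    simp only [coe_filter, mem_univ, true_and, Set.mem_ofPred_eq] at hx
    have hy := hsub x hx
    simp only [← hx, quadMultiplier]
    field_simp
    ring
  · intro y hy
    simp only [coe_filter, mem_univ, true_and, Set.mem_ofPred_eq, coe_erase, Set.mem_sdiff,
      Set.mem_singleton_iff] at hy
    simp only [map_div₀, map_sub, map_mul, map_neg, map_pow, map_ofNat, hw, hc, hy.1]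
    field_simp [hy.2]
    ring

theorem card_orderOf_quadMultiplier [DecidableEq K] (hσq : ∀ x, σ x = x ^ q)
    (hK : Fintype.card K = q ^ 2) (hc : σ c = c) (hc0 : c ≠ 0) (h2 : (2 : K) ≠ 0) (hq : 1 < q)
    {d : ℕ} (hd : d ∣ q - 1) :
    #{x | orderOf (quadMultiplier σ c x) = d} = Nat.totient d * (q - 1) := by
  have hdK : d ∣ Fintype.card K - 1 :=
    hK ▸ hd.trans (by simpa using Nat.sub_dvd_pow_sub_pow q 1 2)
  have hd0 : d ≠ 0 := by
    rintro rfl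
    rw [zero_dvd_iff] at hd
    omega
  set W : Finset K := {w | orderOf w = d}
  calc #{x | orderOf (quadMultiplier σ c x) = d}
      = #{x | quadMultiplier σ c x ∈ W} := by simp [W]
    _ = ∑ w ∈ W, #{x | quadMultiplier σ c x = w} :=
        (sum_card_fiberwise_eq_card_filter _ _ _).symm
    _ = ∑ w ∈ W, (q - 1) := sum_congr rfl fun w hw => ?_
    _ = Nat.totient d * (q - 1) := by
        rw [sum_const, smul_eq_mul, FiniteField.card_orderOf_eq_totient hdK]
  have hwd : orderOf w = d := (mem_filter.mp hw).2
  have hw0 : w ≠ 0 := by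
    rintro rfl
    exact hd0 (hwd ▸ orderOf_zero K)
  have hσw : σ w = w := by
    rw [hσq, ← orderOf_dvd_sub_one_iff_pow_eq_self (hwd ▸ hd0) hq.le, hwd]
    exact hd
  rw [card_quadMultiplier_eq (FiniteField.involutive_of_card_eq_sq hσq hK) hc hc0 h2 hσw hw0,
    card_antifixed_of_card_eq_sq hσq hK h2 hq]

theorem minimalPeriod_quadMap_eq_two_mul_iff (hσq : ∀ x, σ x = x ^ q)
    (hK : Fintype.card K = q ^ 2) (hc : σ c = c) (h2 : (2 : K) ≠ 0) (hq : 1 < q) {n : ℕ}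
    (hn : n ≠ 0) (x : K) :
    minimalPeriod (quadMap σ c) x = 2 * n ↔
      orderOf (quadMultiplier σ c x) ∣ q - 1 ∧ Odd (orderOf (quadMultiplier σ c x)) ∧
        orderOf (4 : ZMod (3 * orderOf (quadMultiplier σ c x))) = n := by
  have hσ := FiniteField.involutive_of_card_eq_sq hσq hK
  constructor
  · intro h
    have hx : x ≠ 0 := by
      rintro rfl
      rw [minimalPeriod_quadMap_zero] at h
      omega
    rw [minimalPeriod_quadMap hσ hc h2 hx, Nat.mul_left_cancel_iff two_pos] at h
    have hodd := ZMod.odd_of_orderOf_four_ne_zero (h ▸ hn)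
    refine ⟨?_, hodd, h⟩
    rw [orderOf_dvd_sub_one_iff_pow_eq_self hodd.pos.ne' hq.le, ← hσq, map_quadMultiplier hσ hc]
  · rintro ⟨-, hodd, h⟩
    have hx : x ≠ 0 := by
      rintro rfl
      rw [quadMultiplier_zero, orderOf_zero] at hodd
      exact Nat.not_odd_zero hodd
    rw [minimalPeriod_quadMap hσ hc h2 hx, h]

end Counting

open scoped Classical in
theorem stmt_8_general (q : ℕ) (hq : Odd q)
    (K : Type*) [Field K] [Fintype K] (hK : Fintype.card K = q ^ 2)
    (c : K) (hcF : c ^ q = c) (hc0 : c ≠ 0) :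
    (∀ n : ℕ, 1 ≤ n →
      Set.ncard {α : K |
          Function.minimalPeriod (fun X : K => c * (X ^ (q + 1) - X ^ 2)) α = 2 * n} =
        ∑ d ∈ (q - 1).divisors.filter
            (fun d => Odd d ∧ orderOf ((4 : ZMod (3 * d))) = n),
          Nat.totient d * (q - 1)) ∧
    (∀ α : K,
      1 < Function.minimalPeriod (fun X : K => c * (X ^ (q + 1) - X ^ 2)) α →
      ∃ d : ℕ, d ∣ q - 1 ∧ Odd d ∧
        Function.minimalPeriod (fun X : K => c * (X ^ (q + 1) - X ^ 2)) α =
          2 * orderOf ((4 : ZMod (3 * d)))) := by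
  obtain ⟨σ, hσq⟩ := FiniteField.exists_ringHom_eq_pow (hK ▸ dvd_pow_self q two_ne_zero)
  have hc : σ c = c := (hσq c).trans hcF
  have hq1 : 1 < q := by
    have := Fintype.one_lt_card (α := K)
    nlinarith
  have h2 : (2 : K) ≠ 0 := Ring.two_ne_zero fun h => by
    have := FiniteField.even_card_iff_char_two.mp h
    rw [hK, ← Nat.even_iff] at this
    exact Nat.not_even_iff_odd.mpr hq.pow this
  have hf : (fun X : K => c * (X ^ (q + 1) - X ^ 2)) = quadMap σ c :=
    funext fun X => by rw [quadMap, hσq, pow_succ, mul_comm X]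
  have hσ := FiniteField.involutive_of_card_eq_sq hσq hK
  simp only [hf]
  refine ⟨fun n hn => ?_, fun x hx => ?_⟩
  · set D := (q - 1).divisors.filter fun d => Odd d ∧ orderOf (4 : ZMod (3 * d)) = n
    calc {x | minimalPeriod (quadMap σ c) x = 2 * n}.ncard
        = #{x | orderOf (quadMultiplier σ c x) ∈ D} := by
          rw [← Set.ncard_coe_finset]
          congr 1
          ext x
          simp [minimalPeriod_quadMap_eq_two_mul_iff hσq hK hc h2 hq1 (n := n) (by omega), D,
            Nat.mem_divisors, Nat.sub_ne_zero_of_lt hq1]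
      _ = ∑ d ∈ D, #{x | orderOf (quadMultiplier σ c x) = d} :=
          (sum_card_fiberwise_eq_card_filter _ _ _).symm
      _ = ∑ d ∈ D, Nat.totient d * (q - 1) := sum_congr rfl fun d hd =>
          card_orderOf_quadMultiplier hσq hK hc hc0 h2 hq1
            (Nat.dvd_of_mem_divisors (mem_filter.mp hd).1)
  · have hx0 : x ≠ 0 := by
      rintro rfl
      rw [minimalPeriod_quadMap_zero] at hx
      exact hx.false
    have hmp := minimalPeriod_quadMap hσ hc h2 hx0
    obtain ⟨hdvd, hodd, -⟩ :=
      (minimalPeriod_quadMap_eq_two_mul_iff hσq hK hc h2 hq1 (by omega) x).mp hmp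
    exact ⟨_, hdvd, hodd, hmp⟩

open scoped Classical in
/-- cycle structure of f(X) = c(X^{q+1} - X^2): for each n ≥ 1 the
points of exact period 2n are counted by φ(d)(q-1) summed over odd divisors d of
q - 1 with ord_{3d}(4) = n, and every cycle length greater than 1 is of the form
2·ord_{3d}(4) for some odd divisor d of q - 1. -/
theorem stmt_8 (q s r : ℕ) (hq : Odd q) (hsr : q - 1 = 2 ^ s * r) (hr : Odd r)
    (K : Type*) [Field K] [Fintype K] (hK : Fintype.card K = q ^ 2)
    (c : K) (hcF : c ^ q = c) (hc0 : c ≠ 0) :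
    (∀ n : ℕ, 1 ≤ n →
      Set.ncard {α : K |
          Function.minimalPeriod (fun X : K => c * (X ^ (q + 1) - X ^ 2)) α = 2 * n} =
        ∑ d ∈ (q - 1).divisors.filter
            (fun d => Odd d ∧ orderOf ((4 : ZMod (3 * d))) = n),
          Nat.totient d * (q - 1)) ∧
    (∀ α : K,
      1 < Function.minimalPeriod (fun X : K => c * (X ^ (q + 1) - X ^ 2)) α →
      ∃ d : ℕ, d ∣ q - 1 ∧ Odd d ∧
        Function.minimalPeriod (fun X : K => c * (X ^ (q + 1) - X ^ 2)) α =
          2 * orderOf ((4 : ZMod (3 * d)))) :=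
  stmt_8_general q hq K hK c hcF hc0
end

section
/- Let q be odd, c ∈ F_q^*, and f(X) = c(X^{q+1} + X^2) on F_{q^2}. If α = yβ with y ∈ F_q^* and β^2 a nonsquare in F_q, then f^{-1}(α) is empty; and f^{-1}(0) = βF_q, a set of exactly q elements. -/
/-!
On a field of order `q²` the map `σ x = x ^ q` is an involutive ring automorphism, and
`f x = c * (σ x * x + x ^ 2) = c * x * (σ x + x)`. As `σ c = c`, we get
`f x + σ (f x) = c * (σ x + x) ^ 2`. If `f x = y * β`, then `σ (f x) = -f x` because `σ β = -β`;
hence `σ x = -x`, so `f x = 0`, a contradiction.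

The zeros of `f` are the `x` with `σ x = -x`, i.e. `β` times the fixed field of `σ`. There are at
most `q` of them, being roots of `X ^ q + X`, and at least `q`, since `x ↦ σ x - x` maps the `q²`
elements of the field into them with fibres of size at most `q`.
-/

open Polynomial

section

variable {K : Type*} [Field K]

theorem ncard_setOf_pow_eq_mul_add_le {n : ℕ} (hn : 2 ≤ n) (a b : K) :
    {x : K | x ^ n = a * x + b}.ncard ≤ n := by
  set P : K[X] := X ^ n - (C a * X + C b)
  have hP : P.natDegree = n := by
    rw [natDegree_sub_eq_left_of_natDegree_lt] <;>
      grind [natDegree_X_pow, natDegree_linear_le]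
  have hP0 : P ≠ 0 := ne_zero_of_natDegree_gt (n := 0) (by omega)
  calc {x : K | x ^ n = a * x + b}.ncard ≤ (P.rootSet K).ncard := by
        refine Set.ncard_le_ncard (fun x hx => ?_) (Set.toFinite _)
        simp_all [mem_rootSet, P]
    _ ≤ n := hP ▸ ncard_rootSet_le P K

section Involution

variable (σ : K →+* K)

theorem mul_add_sq_add_map_eq_mul_sq (hσ : ∀ x, σ (σ x) = x) {c : K} (hc : σ c = c) (x : K) :
    c * (σ x * x + x ^ 2) + σ (c * (σ x * x + x ^ 2)) = c * (σ x + x) ^ 2 := by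
  simp only [map_mul, map_add, map_pow, hσ, hc]
  ring

theorem mul_add_sq_ne_of_map_eq_neg (hσ : ∀ x, σ (σ x) = x) {c a : K} (hc : σ c = c)
    (ha : σ a = -a) (ha0 : a ≠ 0) (x : K) : c * (σ x * x + x ^ 2) ≠ a := by
  intro h
  have hsq := mul_add_sq_add_map_eq_mul_sq σ hσ hc x
  rw [h, ha, add_neg_cancel, eq_comm, mul_eq_zero, sq_eq_zero_iff, add_eq_zero_iff_eq_neg] at hsq
  rcases hsq with rfl | hx
  · exact ha0 (by simpa using h.symm)
  · exact ha0 (by rw [← h, hx]; ring)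

theorem mul_add_sq_eq_zero_iff {c : K} (hc : c ≠ 0) (x : K) :
    c * (σ x * x + x ^ 2) = 0 ↔ σ x = -x := by
  rw [show c * (σ x * x + x ^ 2) = c * x * (σ x + x) by ring]
  simp only [mul_eq_zero, hc, false_or, add_eq_zero_iff_eq_neg]
  exact ⟨fun h => h.elim (fun hx => by simp [hx]) id, Or.inr⟩

theorem map_eq_neg_iff_exists_fixed_mul {β : K} (hβ : σ β = -β) (hβ0 : β ≠ 0) (x : K) :
    σ x = -x ↔ ∃ z, σ z = z ∧ x = z * β := by
  refine ⟨fun hx => ⟨x / β, ?_, (div_mul_cancel₀ x hβ0).symm⟩, ?_⟩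
  · rw [map_div₀, hx, hβ, neg_div_neg_eq]
  · rintro ⟨z, hz, rfl⟩
    rw [map_mul, hz, hβ, mul_neg]

end Involution

section FiniteField

variable [Fintype K] {q : ℕ}

theorem map_map_eq_self_of_card_eq_sq (hK : Fintype.card K = q ^ 2) (σ : K →+* K)
    (hσ : ∀ x, σ x = x ^ q) (x : K) : σ (σ x) = x := by
  rw [hσ, hσ, ← pow_mul, ← sq, ← hK, FiniteField.pow_card]

theorem exists_ringHom_eq_pow_of_card_eq_sq (hK : Fintype.card K = q ^ 2) :
    ∃ σ : K →+* K, ∀ x, σ x = x ^ q := by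
  obtain ⟨p, _⟩ := CharP.exists K
  obtain ⟨n, hp, hn⟩ := FiniteField.card K p
  have : q ∣ p ^ (n : ℕ) := hn ▸ hK ▸ dvd_pow_self q two_ne_zero
  obtain ⟨m, -, rfl⟩ := (Nat.dvd_prime_pow hp).mp this
  have : Fact p.Prime := ⟨hp⟩
  exact ⟨iterateFrobenius K p m, iterateFrobenius_def p m⟩

theorem ncard_setOf_map_eq_neg (hK : Fintype.card K = q ^ 2) (σ : K →+* K)
    (hσ : ∀ x, σ x = x ^ q) : {x : K | σ x = -x}.ncard = q := by
  classical
  have hq : 2 ≤ q := (Nat.one_lt_pow_iff two_ne_zero).mp (hK ▸ Fintype.one_lt_card)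
  have hσσ := map_map_eq_self_of_card_eq_sq hK σ hσ
  have hle : {x : K | σ x = -x}.ncard ≤ q := by
    simpa [hσ] using ncard_setOf_pow_eq_mul_add_le hq (-1 : K) 0
  have hge : q ^ 2 ≤ q * {x : K | σ x = -x}.ncard := by
    rw [← hK, ← Finset.card_univ, Set.ncard_eq_toFinset_card']
    refine Finset.card_le_mul_card_image_of_maps_to (f := fun x => σ x - x) ?_ q ?_
    · intro x _
      simp [hσσ]
    · intro b _
      rw [← Set.ncard_coe_finset, Finset.coe_filter_univ]
      simpa [hσ, sub_eq_iff_eq_add, add_comm] using ncard_setOf_pow_eq_mul_add_le hq 1 b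
  rw [sq] at hge
  exact le_antisymm hle (Nat.le_of_mul_le_mul_left hge (by omega))

end FiniteField

end

theorem stmt_12_general (q : ℕ) (K : Type*) [Field K] [Fintype K]
    (hK : Fintype.card K = q ^ 2)
    (β : K) (hbF : (β ^ 2) ^ q = β ^ 2)
    (hbns : ¬ ∃ t : K, t ^ q = t ∧ t ^ 2 = β ^ 2)
    (c : K) (hcF : c ^ q = c) (hc0 : c ≠ 0) :
    (∀ y : K, y ^ q = y → y ≠ 0 →
      {x : K | c * (x ^ (q + 1) + x ^ 2) = y * β} = ∅) ∧
    {x : K | c * (x ^ (q + 1) + x ^ 2) = 0} =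
      {x : K | ∃ z : K, z ^ q = z ∧ x = z * β} ∧
    Set.ncard {x : K | c * (x ^ (q + 1) + x ^ 2) = 0} = q := by
  obtain ⟨σ, hσ⟩ := exists_ringHom_eq_pow_of_card_eq_sq hK
  have hσσ := map_map_eq_self_of_card_eq_sq hK σ hσ
  have hf (x : K) : x ^ (q + 1) = σ x * x := by rw [pow_succ, hσ]
  have hβ0 : β ≠ 0 := by
    rintro rfl
    exact hbns ⟨0, (hσ 0).symm.trans (map_zero σ), rfl⟩
  have hβ : σ β = -β := by
    have : σ β ^ 2 = β ^ 2 := by rw [← map_pow, hσ, hbF]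
    exact (sq_eq_sq_iff_eq_or_eq_neg.mp this).resolve_left fun h => hbns ⟨β, hσ β ▸ h, rfl⟩
  have hzero : {x : K | c * (x ^ (q + 1) + x ^ 2) = 0} = {x : K | σ x = -x} := by
    ext x
    rw [Set.mem_ofPred, Set.mem_ofPred, hf, mul_add_sq_eq_zero_iff σ hc0]
  refine ⟨fun y hy hy0 => Set.eq_empty_of_forall_notMem fun x hx => ?_, ?_, ?_⟩
  · have hyβ : σ (y * β) = -(y * β) := by rw [map_mul, hσ y, hy, hβ, mul_neg]
    exact mul_add_sq_ne_of_map_eq_neg σ hσσ ((hσ c).trans hcF) hyβ (mul_ne_zero hy0 hβ0) x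
      (hf x ▸ hx)
  · rw [hzero]
    ext x
    simp only [Set.mem_ofPred, ← hσ]
    exact map_eq_neg_iff_exists_fixed_mul σ hβ hβ0 x
  · rw [hzero]
    exact ncard_setOf_map_eq_neg hK σ hσ

/-- for f(X) = c(X^{q+1} + X^2), the preimage of yβ (y ∈ F_q^*) is
empty, and f^{-1}(0) = βF_q has exactly q elements. -/
theorem stmt_12 (q : ℕ) (hq : Odd q) (K : Type*) [Field K] [Fintype K]
    (hK : Fintype.card K = q ^ 2)
    (β : K) (hbF : (β ^ 2) ^ q = β ^ 2)
    (hbns : ¬ ∃ t : K, t ^ q = t ∧ t ^ 2 = β ^ 2)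
    (c : K) (hcF : c ^ q = c) (hc0 : c ≠ 0) :
    (∀ y : K, y ^ q = y → y ≠ 0 →
      {x : K | c * (x ^ (q + 1) + x ^ 2) = y * β} = ∅) ∧
    {x : K | c * (x ^ (q + 1) + x ^ 2) = 0} =
      {x : K | ∃ z : K, z ^ q = z ∧ x = z * β} ∧
    Set.ncard {x : K | c * (x ^ (q + 1) + x ^ 2) = 0} = q :=
  stmt_12_general q K hK β hbF hbns c hcF hc0
end

section
/- Let q be odd, β ∈ F_{q^2} with β^2 a nonsquare in F_q, c ∈ F_q^*, and f(X) = c(X^{q+1} + X^2). Then for all x, y ∈ F_q and n ≥ 1, f^{(n)}(x + yβ) = (2cx)^{2^n - 1} (x + yβ). -/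
/-!
Writing `z = x + yβ`, the hypotheses make `X ↦ X ^ q` the nontrivial automorphism of `K` over
`F_q`, so `z ^ q = x - yβ` and `z ^ q + z = 2x`. Hence for every `a ∈ F_q`,
`f (a z) = a ^ 2 c z (z ^ q + z) = a ^ 2 (2cx) z`: the line `F_q · z` is mapped into itself, and
the scalar evolves by `a ↦ a ^ 2 (2cx)`, which starting from `a = 1` gives `(2cx) ^ (2 ^ n - 1)`.
-/

theorem add_pow_of_dvd_card {K : Type*} [Field K] [Fintype K] {q : ℕ}
    (hq : q ∣ Fintype.card K) (a b : K) : (a + b) ^ q = a ^ q + b ^ q := by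
  have hp : (ringChar K).Prime := CharP.char_is_prime K (ringChar K)
  have := Fact.mk hp
  have : ExpChar K (ringChar K) := ExpChar.prime hp
  obtain ⟨m, -, hcard⟩ := FiniteField.card K (ringChar K)
  obtain ⟨j, -, rfl⟩ := (Nat.dvd_prime_pow hp).mp (hcard ▸ hq)
  exact add_pow_expChar_pow a b (ringChar K) j

theorem pow_eq_neg_of_sq_pow_eq_sq {R : Type*} [CommRing R] [NoZeroDivisors R] {β : R} {q : ℕ}
    (hsq : (β ^ 2) ^ q = β ^ 2) (hne : β ^ q ≠ β) : β ^ q = -β := by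
  have h : (β ^ q - β) * (β ^ q + β) = 0 := by
    linear_combination (by rw [← pow_mul, mul_comm, pow_mul, hsq] : (β ^ q) ^ 2 = β ^ 2)
  exact eq_neg_of_add_eq_zero_left ((mul_eq_zero.mp h).resolve_left (sub_ne_zero.mpr hne))

theorem two_pow_sub_one_mul_two_add_one (n : ℕ) : (2 ^ n - 1) * 2 + 1 = 2 ^ (n + 1) - 1 := by
  have := Nat.one_le_two_pow (n := n)
  rw [pow_succ]
  omega

section Iterate

variable {K : Type*} [CommRing K] {q : ℕ}

theorem mul_pow_succ_add_mul_sq {a : K} (ha : a ^ q = a) (c z : K) :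
    c * ((a * z) ^ (q + 1) + (a * z) ^ 2) = a ^ 2 * (c * (z ^ q + z)) * z := by
  rw [pow_succ, mul_pow, ha]
  ring

theorem iterate_eq_pow_two_pow_sub_one_mul {c z u : K} (hu : u ^ q = u)
    (hz : c * (z ^ q + z) = u) (n : ℕ) :
    (fun X : K => c * (X ^ (q + 1) + X ^ 2))^[n] z = u ^ (2 ^ n - 1) * z := by
  induction n with
  | zero => simp
  | succ n ih =>
    have hfixed : (u ^ (2 ^ n - 1)) ^ q = u ^ (2 ^ n - 1) := by
      rw [← pow_mul, mul_comm, pow_mul, hu]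
    rw [Function.iterate_succ_apply', ih, mul_pow_succ_add_mul_sq hfixed, hz, ← pow_mul,
      ← pow_succ, two_pow_sub_one_mul_two_add_one]

end Iterate

theorem stmt_13_general (q : ℕ) (K : Type*) [Field K] [Fintype K]
    (hK : Fintype.card K = q ^ 2)
    (β : K) (hbF : (β ^ 2) ^ q = β ^ 2)
    (hbns : ¬ ∃ t : K, t ^ q = t ∧ t ^ 2 = β ^ 2)
    (c : K) (hcF : c ^ q = c)
    (x y : K) (hx : x ^ q = x) (hy : y ^ q = y) :
    ∀ n : ℕ, 1 ≤ n →
      (fun X : K => c * (X ^ (q + 1) + X ^ 2))^[n] (x + y * β) =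
        (2 * c * x) ^ (2 ^ n - 1) * (x + y * β) := by
  intro n _
  have hfrob : ∀ a b : K, (a + b) ^ q = a ^ q + b ^ q :=
    add_pow_of_dvd_card (hK ▸ dvd_pow_self q two_ne_zero)
  have hβ : β ^ q = -β := pow_eq_neg_of_sq_pow_eq_sq hbF fun h => hbns ⟨β, h, rfl⟩
  have h2 : (2 : K) ^ q = 2 := by simpa [one_add_one_eq_two] using hfrob 1 1
  refine iterate_eq_pow_two_pow_sub_one_mul ?_ ?_ n
  · rw [mul_pow, mul_pow, h2, hcF, hx]
  · rw [hfrob, mul_pow, hx, hy, hβ]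
    ring

/-- f^{(n)}(x + yβ) = (2cx)^{2^n - 1} (x + yβ) for
f(X) = c(X^{q+1} + X^2). -/
theorem stmt_13 (q : ℕ) (hq : Odd q) (K : Type*) [Field K] [Fintype K]
    (hK : Fintype.card K = q ^ 2)
    (β : K) (hbF : (β ^ 2) ^ q = β ^ 2)
    (hbns : ¬ ∃ t : K, t ^ q = t ∧ t ^ 2 = β ^ 2)
    (c : K) (hcF : c ^ q = c) (hc0 : c ≠ 0)
    (x y : K) (hx : x ^ q = x) (hy : y ^ q = y) :
    ∀ n : ℕ, 1 ≤ n →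
      (fun X : K => c * (X ^ (q + 1) + X ^ 2))^[n] (x + y * β) =
        (2 * c * x) ^ (2 ^ n - 1) * (x + y * β) :=
  stmt_13_general q K hK β hbF hbns c hcF x y hx hy
end

section
/- Let q be odd, a ∈ F_q^* with a ≠ ±1, and f(X) = X^{q+1} + aX^2 on F_{q^2}. Then the only fixed points of f are 0 and 1/(a+1), and f^{-1}(0) = {0}. -/
/-!
Write `σ x = x ^ q`: since `q` is a power of the characteristic and `|K| = q ^ 2`, `σ` is an
involutive field automorphism fixing `a`. For `x ≠ 0`, `x ^ (q + 1) + a x ^ 2 = b x` with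
`σ b = b` says `σ x = b - a x`; applying `σ` once more gives `x = b - a (b - a x)`, i.e.
`(1 - a ^ 2) x = (1 - a) b`, so `x = b / (a + 1)` as soon as `a ≠ ± 1`.
Fixed points are the case `b = 1`, zeros the case `b = 0`.
-/

open Function

theorem FiniteField.exists_involutive_ringHom_eq_pow (K : Type*) [Field K] [Fintype K] {q : ℕ}
    (hK : Fintype.card K = q ^ 2) :
    ∃ σ : K →+* K, Involutive σ ∧ ∀ x, σ x = x ^ q := by
  obtain ⟨p, _⟩ := CharP.exists K
  obtain ⟨n, hp, hn⟩ := FiniteField.card K p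
  have : Fact p.Prime := ⟨hp⟩
  obtain ⟨k, -, rfl⟩ : ∃ k ≤ (n : ℕ), q = p ^ k :=
    (Nat.dvd_prime_pow hp).mp (hn ▸ hK ▸ dvd_pow_self _ two_ne_zero)
  refine ⟨iterateFrobenius K p k, fun x => ?_, fun x => iterateFrobenius_def p k x⟩
  rw [iterateFrobenius_def, iterateFrobenius_def, ← pow_mul, ← sq, ← hK, FiniteField.pow_card]

section Involution

variable {K : Type*} [Field K] {σ : K →+* K} {a b x : K}

theorem eq_div_of_map_eq_sub_mul (hσ : Involutive σ) (ha : σ a = a) (hb : σ b = b)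
    (ha₁ : a ≠ 1) (ha₂ : a ≠ -1) (hx : σ x = b - a * x) : x = b / (a + 1) := by
  have hx₂ : b - a * (b - a * x) = x := by
    simpa only [hx, map_sub, map_mul, ha, hb] using hσ x
  have h : (1 - a) * ((a + 1) * x - b) = 0 := by linear_combination -hx₂
  rcases mul_eq_zero.mp h with h | h
  · exact absurd (sub_eq_zero.mp h).symm ha₁
  · rw [eq_div_iff (add_eq_zero_iff_eq_neg.not.mpr ha₂)]
    linear_combination h

theorem setOf_mul_map_add_mul_sq_eq (hσ : Involutive σ) (ha : σ a = a) (hb : σ b = b)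
    (ha₁ : a ≠ 1) (ha₂ : a ≠ -1) :
    {x : K | x * σ x + a * x ^ 2 = b * x} = {0, b / (a + 1)} := by
  have ha₂' : a + 1 ≠ 0 := add_eq_zero_iff_eq_neg.not.mpr ha₂
  ext x
  simp only [Set.mem_ofPred_eq, Set.mem_insert_iff, Set.mem_singleton_iff]
  have hfactor : x * σ x + a * x ^ 2 - b * x = x * (σ x - (b - a * x)) := by ring
  constructor
  · intro h
    rcases mul_eq_zero.mp (hfactor ▸ sub_eq_zero.mpr h) with h | h
    · exact Or.inl h
    · exact Or.inr (eq_div_of_map_eq_sub_mul hσ ha hb ha₁ ha₂ (sub_eq_zero.mp h))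
  · rintro (rfl | rfl)
    · simp
    · rw [map_div₀, map_add, map_one, ha, hb]
      field_simp
      ring

end Involution

theorem stmt_16_general (q : ℕ) (K : Type*) [Field K] [Fintype K]
    (hK : Fintype.card K = q ^ 2)
    (a : K) (haF : a ^ q = a) (ha1 : a ≠ 1) (ha2 : a ≠ -1) :
    {α : K | α ^ (q + 1) + a * α ^ 2 = α} = {0, (a + 1)⁻¹} ∧
    {γ : K | γ ^ (q + 1) + a * γ ^ 2 = 0} = {0} := by
  obtain ⟨σ, hσ, hσq⟩ := FiniteField.exists_involutive_ringHom_eq_pow K hK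
  have hpow : ∀ x : K, x ^ (q + 1) = x * σ x := fun x => by rw [pow_succ', hσq]
  have ha : σ a = a := (hσq a).trans haF
  have hsol := fun b (hb : σ b = b) => setOf_mul_map_add_mul_sq_eq hσ ha hb ha1 ha2
  constructor
  · simpa only [hpow, one_mul, one_div] using hsol 1 (map_one σ)
  · simpa only [hpow, zero_mul, zero_div, Set.pair_eq_singleton] using hsol 0 (map_zero σ)

/-- for f(X) = X^{q+1} + aX^2 with a ∈ F_q^*, a ≠ ±1, the only
fixed points are 0 and 1/(a+1), and f^{-1}(0) = {0}. -/
theorem stmt_16 (q : ℕ) (hq : Odd q) (K : Type*) [Field K] [Fintype K]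
    (hK : Fintype.card K = q ^ 2)
    (a : K) (haF : a ^ q = a) (ha0 : a ≠ 0) (ha1 : a ≠ 1) (ha2 : a ≠ -1) :
    {α : K | α ^ (q + 1) + a * α ^ 2 = α} = {0, (a + 1)⁻¹} ∧
    {γ : K | γ ^ (q + 1) + a * γ ^ 2 = 0} = {0} :=
  stmt_16_general q K hK a haF ha1 ha2
end

section
/- Let q ≡ 3 (mod 4) be an odd prime power, β with β^2 = b a nonsquare in F_q, a ∈ F_q^* with a ≠ ±1, and f(X) = X^{q+1} + aX^2 on F_{q^2}. For α ∈ F_q^*, the preimage f^{-1}(αβ) has 0 elements if 1 - a^2 is a nonzero square in F_q, and exactly 2 elements if 1 - a^2 is a nonsquare in F_q. -/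
/-!
Let `σ x = x ^ q` be the Frobenius of `K = 𝔽_{q²}` over its fixed field `F = 𝔽_q`, and write
`x = u + v β` with `u, v ∈ F`. As `σ β = -β`, we have `x ^ (q + 1) = σ x * x = u² - β² v²`, and
comparing coordinates, `f x = α β` becomes `(1 + a) u² = (1 - a) β² v²` and `2 a u v = α`.
Multiplied by `1 + a`, the first equation reads `((1 + a) u)² = (1 - a²) β² v²` with `v ≠ 0`, so a
square `1 - a²` would make `β²` a square in `F`. If `1 - a²` is a nonsquare, then `(1 - a²) β²` is a
square, hence `u = ±r v` for a fixed `r`. Since `-1` is a nonsquare in `F` (`q ≡ 3 mod 4`), exactly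
one sign allows `±2 a r v² = α`, and then `v = ±v₀`: the solutions are `±(r + β) v₀`.
-/

section

variable {K : Type*} [Field K]

theorem Subfield.isSquare_mk_iff (F : Subfield K) {z : K} (hz : z ∈ F) :
    IsSquare (⟨z, hz⟩ : F) ↔ ∃ t ∈ F, t ^ 2 = z := by
  constructor
  · rintro ⟨r, hr⟩
    exact ⟨r, r.2, by simpa [sq] using congrArg Subtype.val hr.symm⟩
  · rintro ⟨t, ht, rfl⟩
    exact ⟨⟨t, ht⟩, by ext; simp [sq]⟩

theorem Subfield.exists_sq_eq_mul_of_not_exists_sq_eq (F : Subfield K) [Finite F] {x y : K}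
    (hx : x ∈ F) (hy : y ∈ F) (hx0 : x ≠ 0) (hy0 : y ≠ 0)
    (hxs : ¬∃ t ∈ F, t ^ 2 = x) (hys : ¬∃ t ∈ F, t ^ 2 = y) :
    ∃ t ∈ F, t ^ 2 = x * y := by
  classical
  have : Fintype F := Fintype.ofFinite F
  let x' : F := ⟨x, hx⟩
  let y' : F := ⟨y, hy⟩
  have hx' : quadraticChar F x' = -1 :=
    quadraticChar_neg_one_iff_not_isSquare.2 ((F.isSquare_mk_iff hx).not.2 hxs)
  have hy' : quadraticChar F y' = -1 :=
    quadraticChar_neg_one_iff_not_isSquare.2 ((F.isSquare_mk_iff hy).not.2 hys)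
  have hxy : quadraticChar F (x' * y') = 1 := by rw [map_mul, hx', hy']; rfl
  have hxy0 : x' * y' ≠ 0 := mul_ne_zero (fun h => hx0 (congrArg Subtype.val h))
    (fun h => hy0 (congrArg Subtype.val h))
  exact (F.isSquare_mk_iff (F.mul_mem hx hy)).1 ((quadraticChar_one_iff_isSquare hxy0).1 hxy)

theorem Subfield.exists_sq_eq_or_sq_eq_neg (F : Subfield K) [Finite F]
    (hF : ¬∃ t ∈ F, t ^ 2 = -1) {c : K} (hc : c ∈ F) (hc0 : c ≠ 0) :
    ∃ t ∈ F, t ^ 2 = c ∨ t ^ 2 = -c := by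
  by_cases hcs : ∃ t ∈ F, t ^ 2 = c
  · obtain ⟨t, ht, htc⟩ := hcs
    exact ⟨t, ht, Or.inl htc⟩
  · obtain ⟨t, ht, htc⟩ := F.exists_sq_eq_mul_of_not_exists_sq_eq (F.neg_mem F.one_mem) hc
      (neg_ne_zero.2 one_ne_zero) hc0 hF hcs
    exact ⟨t, ht, Or.inr (by rw [htc, neg_one_mul])⟩

theorem Subfield.eq_zero_of_add_mul_eq_zero (F : Subfield K) {β u v : K} (hβ : β ∉ F)
    (hu : u ∈ F) (hv : v ∈ F) (h : u + v * β = 0) : u = 0 ∧ v = 0 := by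
  by_cases hv0 : v = 0
  · simpa [hv0] using h
  · refine absurd ?_ hβ
    have hβ' : β = -u / v := by field_simp; linear_combination h
    exact hβ' ▸ F.div_mem (F.neg_mem hu) hv

theorem Subfield.exists_solution_of_not_exists_sq_eq_one_sub_sq (F : Subfield K) [Finite F]
    (h2 : (2 : K) ≠ 0) {β a α : K} (hβ2 : β ^ 2 ∈ F) (hβ : ¬∃ t ∈ F, t ^ 2 = β ^ 2)
    (hF : ¬∃ t ∈ F, t ^ 2 = -1) (ha : a ∈ F) (ha0 : a ≠ 0) (hα : α ∈ F) (hα0 : α ≠ 0)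
    (hns : ¬∃ t ∈ F, t ^ 2 = 1 - a ^ 2) :
    ∃ r ∈ F, ∃ v ∈ F, (1 + a) * r ^ 2 = (1 - a) * β ^ 2 ∧ 2 * a * r * v ^ 2 = α := by
  have hβ0 : β ^ 2 ≠ 0 := fun h => hβ ⟨0, zero_mem _, by rw [h, sq, mul_zero]⟩
  have ha2 : 1 - a ^ 2 ≠ 0 := fun h => hns ⟨0, zero_mem _, by rw [h, sq, mul_zero]⟩
  have ha1 : 1 + a ≠ 0 := fun h => ha2 (by linear_combination (1 - a) * h)
  obtain ⟨s, hs, hs2⟩ := F.exists_sq_eq_mul_of_not_exists_sq_eq hβ2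
    (sub_mem (one_mem _) (pow_mem ha 2)) hβ0 ha2 hβ hns
  set r₀ := s / (1 + a) with hr₀
  have hr₀2 : (1 + a) * r₀ ^ 2 = (1 - a) * β ^ 2 := by
    rw [hr₀, div_pow, ← mul_div_assoc, div_eq_iff (pow_ne_zero 2 ha1), hs2]
    ring
  have hr₀0 : r₀ ≠ 0 := by
    refine div_ne_zero (fun hs0 => mul_ne_zero hβ0 ha2 ?_) ha1
    rw [← hs2, hs0, sq, mul_zero]
  -- the sign of `r = ±r₀` is chosen to make `α / (2 a r)` a square
  have hc0 : α / (2 * a * r₀) ≠ 0 := div_ne_zero hα0 (mul_ne_zero (mul_ne_zero h2 ha0) hr₀0)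
  obtain ⟨v, hv, hv2 | hv2⟩ := F.exists_sq_eq_or_sq_eq_neg hF (by aesop) hc0
  · refine ⟨r₀, by aesop, v, hv, hr₀2, ?_⟩
    rw [mul_assoc, hv2]
    field_simp
  · refine ⟨-r₀, by aesop, v, hv, by linear_combination hr₀2, ?_⟩
    rw [mul_assoc, hv2]
    field_simp

theorem not_exists_pow_eq_self_and_sq_eq_neg_one (h2 : (2 : K) ≠ 0) {q : ℕ} (hq : q % 4 = 3) :
    ¬∃ s : K, s ^ q = s ∧ s ^ 2 = -1 := by
  rintro ⟨s, hsq, hs⟩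
  obtain ⟨k, rfl⟩ : ∃ k, q = 2 * (2 * k + 1) + 1 := ⟨q / 4, by omega⟩
  have hs_neg : s ^ (2 * (2 * k + 1) + 1) = -s := by
    rw [pow_succ, pow_mul, hs, Odd.neg_one_pow ⟨k, rfl⟩, neg_one_mul]
  have hs2 : 2 * s = 0 := by linear_combination hs_neg - hsq
  simp [(mul_eq_zero.1 hs2).resolve_left h2] at hs

theorem two_ne_zero_of_odd_card [Fintype K] (hK : Odd (Fintype.card K)) : (2 : K) ≠ 0 :=
  Ring.two_ne_zero fun h => by
    rw [FiniteField.even_card_iff_char_two, ← Nat.even_iff] at h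
    exact Nat.not_even_iff_odd.2 hK h

section Frobenius

variable [Fintype K] {q : ℕ}

theorem exists_eq_ringChar_pow_of_card_eq_sq (hK : Fintype.card K = q ^ 2) :
    ∃ k, q = ringChar K ^ k := by
  obtain ⟨n, hp, hn⟩ := FiniteField.card K (ringChar K)
  have hq : q ∣ ringChar K ^ (n : ℕ) := hn ▸ hK ▸ dvd_pow_self q two_ne_zero
  obtain ⟨k, -, hk⟩ := (Nat.dvd_prime_pow hp).1 hq
  exact ⟨k, hk⟩

def powRingHom (hK : Fintype.card K = q ^ 2) : K →+* K where
  toFun x := x ^ q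
  map_one' := one_pow q
  map_mul' x y := mul_pow x y q
  map_zero' := zero_pow fun hq => by simp [hq] at hK
  map_add' x y := by
    obtain ⟨k, rfl⟩ := exists_eq_ringChar_pow_of_card_eq_sq hK
    have : Fact (ringChar K).Prime := ⟨CharP.char_is_prime K _⟩
    exact add_pow_char_pow x y (ringChar K) k

theorem powRingHom_apply (hK : Fintype.card K = q ^ 2) (x : K) : powRingHom hK x = x ^ q := rfl

theorem powRingHom_powRingHom (hK : Fintype.card K = q ^ 2) (x : K) :
    powRingHom hK (powRingHom hK x) = x := by
  rw [powRingHom_apply, powRingHom_apply, ← pow_mul, ← sq, ← hK, FiniteField.pow_card]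

end Frobenius

def RingHom.fixedSubfield (σ : K →+* K) : Subfield K := σ.eqLocusField (RingHom.id K)

namespace RingHom

variable {σ : K →+* K} {β u v : K}

theorem mem_fixedSubfield {x : K} : x ∈ σ.fixedSubfield ↔ σ x = x := Iff.rfl

theorem map_eq_neg_of_sq_mem_fixedSubfield (hβ2 : β ^ 2 ∈ σ.fixedSubfield)
    (hβ : β ∉ σ.fixedSubfield) : σ β = -β := by
  have hsq : σ β ^ 2 = β ^ 2 := by rw [← map_pow, mem_fixedSubfield.1 hβ2]
  exact (sq_eq_sq_iff_eq_or_eq_neg.1 hsq).resolve_left hβ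

theorem exists_mem_fixedSubfield_eq_add_mul (hσ : ∀ x, σ (σ x) = x) (h2 : (2 : K) ≠ 0)
    (hβ : σ β = -β) (hβ0 : β ≠ 0) (x : K) :
    ∃ u ∈ σ.fixedSubfield, ∃ v ∈ σ.fixedSubfield, x = u + v * β := by
  refine ⟨(x + σ x) / 2, ?_, (x - σ x) / (2 * β), ?_, by field_simp; ring⟩ <;>
    simp only [mem_fixedSubfield, map_div₀, map_add, map_sub, map_mul, map_ofNat, hσ, hβ]
  · ring
  · field_simp
    ring

theorem map_add_mul_of_mem (hβ : σ β = -β) (hu : u ∈ σ.fixedSubfield) (hv : v ∈ σ.fixedSubfield) :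
    σ (u + v * β) = u - v * β := by
  rw [map_add, map_mul, mem_fixedSubfield.1 hu, mem_fixedSubfield.1 hv, hβ, mul_neg, sub_eq_add_neg]

end RingHom

section Preimage

variable {σ : K →+* K} {β a α : K}

theorem conj_mul_add_mul_sq_eq_mul_iff (hβ2 : β ^ 2 ∈ σ.fixedSubfield)
    (hβ : β ∉ σ.fixedSubfield) (ha : a ∈ σ.fixedSubfield) (hα : α ∈ σ.fixedSubfield) {u v : K}
    (hu : u ∈ σ.fixedSubfield) (hv : v ∈ σ.fixedSubfield) :
    σ (u + v * β) * (u + v * β) + a * (u + v * β) ^ 2 = α * β ↔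
      (1 + a) * u ^ 2 = (1 - a) * β ^ 2 * v ^ 2 ∧ 2 * a * u * v = α := by
  have hexp : σ (u + v * β) * (u + v * β) + a * (u + v * β) ^ 2 - α * β =
      ((1 + a) * u ^ 2 - (1 - a) * β ^ 2 * v ^ 2) + (2 * a * u * v - α) * β := by
    rw [RingHom.map_add_mul_of_mem (RingHom.map_eq_neg_of_sq_mem_fixedSubfield hβ2 hβ) hu hv]
    ring
  rw [← sub_eq_zero, hexp]
  constructor
  · intro h
    exact (Subfield.eq_zero_of_add_mul_eq_zero _ hβ (by aesop) (by aesop) h).imp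
      sub_eq_zero.1 sub_eq_zero.1
  · rintro ⟨h1, h2⟩
    rw [h1, h2, sub_self, sub_self, zero_mul, add_zero]

theorem mem_setOf_conj_mul_add_mul_sq_eq_mul_iff (hσ : ∀ x, σ (σ x) = x) (h2 : (2 : K) ≠ 0)
    (hβ2 : β ^ 2 ∈ σ.fixedSubfield) (hβ : ¬∃ t ∈ σ.fixedSubfield, t ^ 2 = β ^ 2)
    (ha : a ∈ σ.fixedSubfield) (hα : α ∈ σ.fixedSubfield) {x : K} :
    x ∈ {x | σ x * x + a * x ^ 2 = α * β} ↔
      ∃ u ∈ σ.fixedSubfield, ∃ v ∈ σ.fixedSubfield, x = u + v * β ∧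
        (1 + a) * u ^ 2 = (1 - a) * β ^ 2 * v ^ 2 ∧ 2 * a * u * v = α := by
  have hβF : β ∉ σ.fixedSubfield := fun h => hβ ⟨β, h, rfl⟩
  have hβ0 : β ≠ 0 := fun h => hβ ⟨0, zero_mem _, by rw [h]⟩
  constructor
  · intro hx
    obtain ⟨u, hu, v, hv, rfl⟩ := RingHom.exists_mem_fixedSubfield_eq_add_mul hσ h2
      (RingHom.map_eq_neg_of_sq_mem_fixedSubfield hβ2 hβF) hβ0 x
    exact ⟨u, hu, v, hv, rfl, (conj_mul_add_mul_sq_eq_mul_iff hβ2 hβF ha hα hu hv).1 hx⟩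
  · rintro ⟨u, hu, v, hv, rfl, h⟩
    exact (conj_mul_add_mul_sq_eq_mul_iff hβ2 hβF ha hα hu hv).2 h

theorem setOf_conj_mul_add_mul_sq_eq_mul_eq_empty (hσ : ∀ x, σ (σ x) = x) (h2 : (2 : K) ≠ 0)
    (hβ2 : β ^ 2 ∈ σ.fixedSubfield) (hβ : ¬∃ t ∈ σ.fixedSubfield, t ^ 2 = β ^ 2)
    (ha : a ∈ σ.fixedSubfield) (ha1 : a ≠ 1) (ha2 : a ≠ -1) (hα : α ∈ σ.fixedSubfield)
    (hα0 : α ≠ 0) (hsq : ∃ t ∈ σ.fixedSubfield, t ^ 2 = 1 - a ^ 2) :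
    {x | σ x * x + a * x ^ 2 = α * β} = ∅ := by
  obtain ⟨t, ht, hta⟩ := hsq
  refine Set.eq_empty_of_forall_notMem fun x hx => hβ ?_
  obtain ⟨u, hu, v, hv, -, huv, hα'⟩ :=
    (mem_setOf_conj_mul_add_mul_sq_eq_mul_iff hσ h2 hβ2 hβ ha hα).1 hx
  have hv0 : v ≠ 0 := by
    rintro rfl
    exact hα0 (by rw [← hα', mul_zero])
  have ht0 : t ≠ 0 := by
    rintro rfl
    have : (1 - a) * (1 + a) = 0 := by linear_combination -hta
    rcases mul_eq_zero.1 this with h | h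
    · exact ha1 (by linear_combination -h)
    · exact ha2 (by linear_combination h)
  -- `((1 + a) u)² = (1 - a²) β² v² = (t v β)²`
  refine ⟨(1 + a) * u / (t * v), by aesop, ?_⟩
  field_simp
  linear_combination (1 + a) * huv - β ^ 2 * v ^ 2 * hta

theorem setOf_conj_mul_add_mul_sq_eq_mul_eq_pair (hσ : ∀ x, σ (σ x) = x) (h2 : (2 : K) ≠ 0)
    (hβ2 : β ^ 2 ∈ σ.fixedSubfield) (hβ : ¬∃ t ∈ σ.fixedSubfield, t ^ 2 = β ^ 2)
    (hF : ¬∃ t ∈ σ.fixedSubfield, t ^ 2 = -1) (ha : a ∈ σ.fixedSubfield) (ha2 : a ≠ -1)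
    (hα : α ∈ σ.fixedSubfield) (hα0 : α ≠ 0) {r v₀ : K} (hr : r ∈ σ.fixedSubfield)
    (hv₀ : v₀ ∈ σ.fixedSubfield) (hr2 : (1 + a) * r ^ 2 = (1 - a) * β ^ 2)
    (hv₀2 : 2 * a * r * v₀ ^ 2 = α) :
    {x | σ x * x + a * x ^ 2 = α * β} = {(r + β) * v₀, -((r + β) * v₀)} := by
  have har : 2 * a * r ≠ 0 := left_ne_zero_of_mul (hv₀2 ▸ hα0 : 2 * a * r * v₀ ^ 2 ≠ 0)
  have hv₀0 : v₀ ≠ 0 := by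
    rintro rfl
    exact hα0 (by rw [← hv₀2]; ring)
  have ha1 : 1 + a ≠ 0 := fun h => ha2 (by linear_combination h)
  ext x
  rw [mem_setOf_conj_mul_add_mul_sq_eq_mul_iff hσ h2 hβ2 hβ ha hα, Set.mem_insert_iff,
    Set.mem_singleton_iff]
  constructor
  · rintro ⟨u, hu, v, hv, rfl, huv, hα'⟩
    have hu2 : u ^ 2 = (r * v) ^ 2 :=
      mul_left_cancel₀ ha1 (by linear_combination huv - v ^ 2 * hr2)
    rcases sq_eq_sq_iff_eq_or_eq_neg.1 hu2 with rfl | rfl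
    · have hv2 : v ^ 2 = v₀ ^ 2 := mul_left_cancel₀ har (by linear_combination hα' - hv₀2)
      rcases sq_eq_sq_iff_eq_or_eq_neg.1 hv2 with rfl | rfl
      · left; ring
      · right; ring
    · refine absurd ⟨v / v₀, div_mem hv hv₀, ?_⟩ hF
      rw [div_pow, div_eq_iff (pow_ne_zero 2 hv₀0)]
      exact mul_left_cancel₀ har (by linear_combination -hα' + hv₀2)
  · rintro (rfl | rfl)
    · exact ⟨r * v₀, mul_mem hr hv₀, v₀, hv₀, by ring, by linear_combination v₀ ^ 2 * hr2,
        by linear_combination hv₀2⟩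
    · exact ⟨-(r * v₀), neg_mem (mul_mem hr hv₀), -v₀, neg_mem hv₀, by ring,
        by linear_combination v₀ ^ 2 * hr2, by linear_combination hv₀2⟩

theorem ncard_setOf_conj_mul_add_mul_sq_eq_mul [Finite σ.fixedSubfield]
    (hσ : ∀ x, σ (σ x) = x) (h2 : (2 : K) ≠ 0)
    (hβ2 : β ^ 2 ∈ σ.fixedSubfield) (hβ : ¬∃ t ∈ σ.fixedSubfield, t ^ 2 = β ^ 2)
    (hF : ¬∃ t ∈ σ.fixedSubfield, t ^ 2 = -1) (ha : a ∈ σ.fixedSubfield) (ha0 : a ≠ 0)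
    (ha2 : a ≠ -1) (hα : α ∈ σ.fixedSubfield) (hα0 : α ≠ 0)
    (hns : ¬∃ t ∈ σ.fixedSubfield, t ^ 2 = 1 - a ^ 2) :
    {x | σ x * x + a * x ^ 2 = α * β}.ncard = 2 := by
  obtain ⟨r, hr, v₀, hv₀, hr2, hv₀2⟩ :=
    σ.fixedSubfield.exists_solution_of_not_exists_sq_eq_one_sub_sq h2 hβ2 hβ hF ha ha0 hα hα0 hns
  rw [setOf_conj_mul_add_mul_sq_eq_mul_eq_pair hσ h2 hβ2 hβ hF ha ha2 hα hα0 hr hv₀ hr2 hv₀2]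
  refine Set.ncard_pair fun h => ?_
  have hrβ : r + β ≠ 0 := fun h => hβ ⟨β, eq_neg_of_add_eq_zero_right h ▸ neg_mem hr, rfl⟩
  have hv₀0 : v₀ ≠ 0 := by
    rintro rfl
    exact hα0 (by rw [← hv₀2]; ring)
  exact mul_ne_zero h2 (mul_ne_zero hrβ hv₀0) (by linear_combination h)

end Preimage

end

/-- for q ≡ 3 (mod 4), f(X) = X^{q+1} + aX^2, a ∈ F_q^* \ {±1}, and
α ∈ F_q^*, the preimage f^{-1}(αβ) is empty if 1 - a² is a (nonzero) square in
F_q, and has exactly 2 elements if 1 - a² is a nonsquare. -/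
theorem stmt_19 (q : ℕ) (hq : q % 4 = 3) (K : Type*) [Field K] [Fintype K]
    (hK : Fintype.card K = q ^ 2)
    (β : K) (hbF : (β ^ 2) ^ q = β ^ 2)
    (hbns : ¬ ∃ t : K, t ^ q = t ∧ t ^ 2 = β ^ 2)
    (a : K) (haF : a ^ q = a) (ha0 : a ≠ 0) (ha1 : a ≠ 1) (ha2 : a ≠ -1)
    (α : K) (hαF : α ^ q = α) (hα0 : α ≠ 0) :
    ((∃ t : K, t ^ q = t ∧ t ^ 2 = 1 - a ^ 2) →
      {x : K | x ^ (q + 1) + a * x ^ 2 = α * β} = ∅) ∧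
    ((¬ ∃ t : K, t ^ q = t ∧ t ^ 2 = 1 - a ^ 2) →
      Set.ncard {x : K | x ^ (q + 1) + a * x ^ 2 = α * β} = 2) := by
  have h2 : (2 : K) ≠ 0 := two_ne_zero_of_odd_card (hK ▸ (Nat.odd_iff.2 (by omega)).pow)
  have hσ := powRingHom_powRingHom hK
  have hF : ¬∃ t ∈ (powRingHom hK).fixedSubfield, t ^ 2 = -1 :=
    not_exists_pow_eq_self_and_sq_eq_neg_one h2 hq
  have hS : {x : K | x ^ (q + 1) + a * x ^ 2 = α * β} =
      {x | powRingHom hK x * x + a * x ^ 2 = α * β} := by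
    simp only [powRingHom_apply, pow_succ]
  rw [hS]
  exact ⟨setOf_conj_mul_add_mul_sq_eq_mul_eq_empty hσ h2 hbF hbns haF ha1 ha2 hαF hα0,
    ncard_setOf_conj_mul_add_mul_sq_eq_mul hσ h2 hbF hbns hF haF ha0 ha2 hαF hα0⟩
end
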